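/- arXiv:math/9810050 — 6 statements merged into one kernel-verified Lean document; each statement's English description precedes it below -/
import Mathlib

section
/- Let L be a lattice, let 0, 1 ∈ L with 0 ≠ 1, let n ∈ ℕ, and let τ : L^{n+1} → L be monotone with respect to the componentwise order. Suppose a, b, a', b' ∈ L and c̄, c̄' ∈ Lⁿ satisfy τ(a, c̄) = 0, τ(b, c̄) = 1, τ(a', c̄') = 0, τ(b', c̄') = 1, and moreover τ(a', c̄) = 0 holds if and only if τ(b', c̄) = 0 holds. Then the tuples (a, b, c̄) and (a', b', c̄') are incomparable in L^{n+2} with the componentwise order: neither (a, b, c̄) ≤ (a', b', c̄') nor (a', b', c̄') ≤ (a, b, c̄). -/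
universe u

/-! If `(a, b, c̄) ≤ (a', b', c̄')` (or `≥`), then by monotonicity `τ(a', c̄)` is squeezed between
`τ(a, c̄) = 0` and `τ(a', c̄') = 0`, and `τ(b', c̄)` between `τ(b, c̄) = 1` and `τ(b', c̄') = 1`.
So `τ(a', c̄) = 0` while `τ(b', c̄) = 1 ≠ 0`, contradicting the hypothesis that these two values
are `0` together. -/

theorem Monotone.eq_of_le_of_le {α β : Type*} [Preorder α] [PartialOrder β] {f : α → β}
    (hf : Monotone f) {x m y : α} {v : β} (hxm : x ≤ m) (hmy : m ≤ y)
    (hx : f x = v) (hy : f y = v) : f m = v :=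
  le_antisymm (hy ▸ hf hmy) (hx ▸ hf hxm)

section FinCons

variable {α β : Type*} [Preorder α] [PartialOrder β] {n : ℕ} {τ : (Fin (n + 1) → α) → β}
  {p p' : α} {c c' : Fin n → α} {v : β}

theorem Monotone.fin_cons_eq_of_le (hτ : Monotone τ) (hp : p ≤ p') (hc : c ≤ c')
    (hlo : τ (Fin.cons p c) = v) (hhi : τ (Fin.cons p' c') = v) : τ (Fin.cons p' c) = v :=
  hτ.eq_of_le_of_le (Fin.cons_le_cons.mpr ⟨hp, le_rfl⟩) (Fin.cons_le_cons.mpr ⟨le_rfl, hc⟩)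
    hlo hhi

theorem Monotone.fin_cons_eq_of_ge (hτ : Monotone τ) (hp : p' ≤ p) (hc : c' ≤ c)
    (hhi : τ (Fin.cons p c) = v) (hlo : τ (Fin.cons p' c') = v) : τ (Fin.cons p' c) = v :=
  hτ.eq_of_le_of_le (Fin.cons_le_cons.mpr ⟨le_rfl, hc⟩) (Fin.cons_le_cons.mpr ⟨hp, le_rfl⟩)
    hlo hhi

end FinCons

/-- The key incomparability step: if a monotone `τ : L^{n+1} → L` separates `a` from `b`
over `c̄` and `a'` from `b'` over `c̄'` (with values `0` and `1`, `0 ≠ 1`), and `a'`, `b'`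
behave alike in `τ(·, c̄)` as far as the value `0` is concerned, then the tuples
`(a, b, c̄)` and `(a', b', c̄')` are incomparable in `L^{n+2}`. -/
theorem stmt3 {L : Type u} [Lattice L] (z o : L) (hzo : z ≠ o) (n : ℕ)
    (τ : (Fin (n + 1) → L) → L) (hτ : Monotone τ)
    (a b a' b' : L) (c c' : Fin n → L)
    (h1 : τ (Fin.cons a c) = z) (h2 : τ (Fin.cons b c) = o)
    (h3 : τ (Fin.cons a' c') = z) (h4 : τ (Fin.cons b' c') = o)
    (h5 : τ (Fin.cons a' c) = z ↔ τ (Fin.cons b' c) = z) :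
    ¬ (Fin.cons a (Fin.cons b c) : Fin (n + 2) → L) ≤ Fin.cons a' (Fin.cons b' c') ∧
    ¬ (Fin.cons a' (Fin.cons b' c') : Fin (n + 2) → L) ≤ Fin.cons a (Fin.cons b c) := by
  refine ⟨fun h => ?_, fun h => ?_⟩ <;>
    obtain ⟨ha, hb, hc⟩ := Fin.cons_le_cons.mp h |>.imp_right Fin.cons_le_cons.mp
  · exact hzo ((h5.mp (hτ.fin_cons_eq_of_le ha hc h1 h3)).symm.trans
      (hτ.fin_cons_eq_of_le hb hc h2 h4))
  · exact hzo ((h5.mp (hτ.fin_cons_eq_of_ge ha hc h1 h3)).symm.trans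
      (hτ.fin_cons_eq_of_ge hb hc h2 h4))
end

section
/- Let L be an infinite lattice and n ≥ 1. If L is n-order polynomially complete, then every antichain A ⊆ Lⁿ (in the componentwise order) has cardinality strictly less than #L. -/
universe u

/-- An `n`-ary polynomial function on a lattice: member of the smallest set of functions
`Lⁿ → L` containing all coordinate projections and all constant functions and closed
under pointwise meet and join. -/
inductive IsLatticePolynomial {L : Type u} [Lattice L] {n : ℕ} : ((Fin n → L) → L) → Prop
  | proj (i : Fin n) : IsLatticePolynomial (fun x => x i)
  | const (c : L) : IsLatticePolynomial (fun _ => c)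
  | inf {p q : (Fin n → L) → L} : IsLatticePolynomial p → IsLatticePolynomial q →
      IsLatticePolynomial (fun x => p x ⊓ q x)
  | sup {p q : (Fin n → L) → L} : IsLatticePolynomial p → IsLatticePolynomial q →
      IsLatticePolynomial (fun x => p x ⊔ q x)


/-!
For an antichain `A ⊆ Lⁿ` and `u < v` in `L`, the maps sending `x` to `v` if `x` lies above some
point of `S` and to `u` otherwise are monotone, and they are pairwise distinct as `S` ranges over
the subsets of `A`: there are `2 ^ #A` of them. Polynomial functions, on the other hand, are
values of terms built from the elements of `L`, the `n` variables, `⊓` and `⊔`, and there are at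
most `max #L ℵ₀ = #L` such terms. So `2 ^ #A ≤ #L`, and Cantor's theorem gives `#A < #L`.
-/

open Cardinal

theorem IsAntichain.injective_upperClosure_image {α : Type*} [Preorder α] {A : Set α}
    (hA : IsAntichain (· ≤ ·) A) :
    Function.Injective fun S : Set A => upperClosure (Subtype.val '' S) := by
  have mem_iff (S : Set A) (c : A) : (c : α) ∈ upperClosure (Subtype.val '' S) ↔ c ∈ S := by
    refine ⟨?_, fun hc => subset_upperClosure ⟨c, hc, rfl⟩⟩
    rintro ⟨_, ⟨d, hd, rfl⟩, hdc⟩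
    rwa [← Subtype.ext (hA.eq d.2 c.2 hdc)]
  intro S T (hST : upperClosure _ = upperClosure _)
  ext c
  rw [← mem_iff, ← mem_iff, hST]

theorem UpperSet.mk_le_mk_monotone {α β : Type u} [Preorder α] [Preorder β] {a b : β}
    (hab : a < b) : #(UpperSet α) ≤ #{f : α → β // Monotone f} := by
  classical
  let ind (s : UpperSet α) (x : α) : β := if x ∈ s then b else a
  have ind_eq_iff (s : UpperSet α) (x : α) : ind s x = b ↔ x ∈ s := by
    by_cases hx : x ∈ s <;> simp [ind, hx, hab.ne]
  have ind_mono (s : UpperSet α) : Monotone (ind s) := fun x y hxy => by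
    by_cases hx : x ∈ s
    · have hy : y ∈ s := s.upper hxy hx
      simp [ind, hx, hy]
    · by_cases hy : y ∈ s <;> simp [ind, hx, hy, hab.le]
  refine mk_le_of_injective (f := fun s => ⟨ind s, ind_mono s⟩) fun s t hst => ?_
  have hst : ind s = ind t := Subtype.ext_iff.1 hst
  refine SetLike.ext fun x => ?_
  rw [← ind_eq_iff s, ← ind_eq_iff t, hst]

/-- Node labels of lattice polynomial terms; `true` labels `⊔` and `false` labels `⊓`. -/
abbrev LatticeTermNode (L : Type u) (n : ℕ) : Type u := L ⊕ Fin n ⊕ Bool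

def LatticeTermNode.arity {L : Type u} {n : ℕ} : LatticeTermNode L n → Type
  | .inl _ => Empty
  | .inr (.inl _) => Empty
  | .inr (.inr _) => Bool

instance {L : Type u} {n : ℕ} (a : LatticeTermNode L n) : Finite a.arity := by
  rcases a with _ | _ | _ <;> dsimp [LatticeTermNode.arity] <;> infer_instance

abbrev LatticeTerm (L : Type u) (n : ℕ) : Type u := WType (@LatticeTermNode.arity L n)

namespace LatticeTerm

variable {L : Type u} {n : ℕ}

theorem mk_le : #(LatticeTerm L n) ≤ max #L ℵ₀ := by
  refine WType.cardinalMk_le_max_aleph0_of_finite'.trans ?_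
  have hfin : lift.{u} #(Fin n ⊕ Bool) ≤ ℵ₀ := (lift_lt_aleph0.2 (lt_aleph0_of_finite _)).le
  rw [lift_uzero, mk_sum, lift_uzero]
  exact max_le ((add_le_max _ _).trans
    (max_le (max_le (le_max_left _ _) (hfin.trans (le_max_right _ _))) (le_max_right _ _)))
    (le_max_right _ _)

variable [Lattice L]

def eval : LatticeTerm L n → (Fin n → L) → L
  | ⟨.inl c, _⟩, _ => c
  | ⟨.inr (.inl i), _⟩, x => x i
  | ⟨.inr (.inr true), t⟩, x => eval (t true) x ⊔ eval (t false) x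
  | ⟨.inr (.inr false), t⟩, x => eval (t true) x ⊓ eval (t false) x

theorem exists_eval_eq {p : (Fin n → L) → L} (hp : IsLatticePolynomial p) :
    ∃ t : LatticeTerm L n, t.eval = p := by
  induction hp with
  | proj i => exact ⟨⟨.inr (.inl i), Empty.elim⟩, rfl⟩
  | const c => exact ⟨⟨.inl c, Empty.elim⟩, rfl⟩
  | inf _ _ ihp ihq =>
    obtain ⟨s, rfl⟩ := ihp
    obtain ⟨t, rfl⟩ := ihq
    exact ⟨⟨.inr (.inr false), fun b : Bool => if b then s else t⟩, rfl⟩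
  | sup _ _ ihp ihq =>
    obtain ⟨s, rfl⟩ := ihp
    obtain ⟨t, rfl⟩ := ihq
    exact ⟨⟨.inr (.inr true), fun b : Bool => if b then s else t⟩, rfl⟩

end LatticeTerm

theorem IsLatticePolynomial.mk_le {L : Type u} [Lattice L] {n : ℕ} :
    #{p : (Fin n → L) → L // IsLatticePolynomial p} ≤ max #L ℵ₀ :=
  (mk_le_mk_of_subset fun _ hp => LatticeTerm.exists_eval_eq hp).trans
    (mk_range_le.trans LatticeTerm.mk_le)

theorem stmt6_general {L : Type u} [Lattice L] [Infinite L] (n : ℕ)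
    (hopc : ∀ f : (Fin n → L) → L, Monotone f → IsLatticePolynomial f)
    (A : Set (Fin n → L)) (hA : IsAntichain (· ≤ ·) A) :
    Cardinal.mk A < Cardinal.mk L := by
  obtain ⟨a, b, hab⟩ := exists_pair_ne L
  calc #A < 2 ^ #A := cantor _
    _ = #(Set A) := mk_set.symm
    _ ≤ #(UpperSet (Fin n → L)) := mk_le_of_injective hA.injective_upperClosure_image
    _ ≤ #{f : (Fin n → L) → L // Monotone f} := UpperSet.mk_le_mk_monotone (inf_lt_sup.2 hab)
    _ ≤ #{p : (Fin n → L) → L // IsLatticePolynomial p} :=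
        mk_le_mk_of_subset fun f hf => hopc f hf
    _ ≤ max #L ℵ₀ := IsLatticePolynomial.mk_le
    _ = #L := max_eq_left (aleph0_le_mk L)

/-- If an infinite lattice `L` is `n`-order polynomially complete (`n ≥ 1`), then every
antichain in `Lⁿ` has cardinality strictly less than `#L`. -/
theorem stmt6 {L : Type u} [Lattice L] [Infinite L] (n : ℕ) (hn : 1 ≤ n)
    (hopc : ∀ f : (Fin n → L) → L, Monotone f → IsLatticePolynomial f)
    (A : Set (Fin n → L)) (hA : IsAntichain (· ≤ ·) A) :
    Cardinal.mk A < Cardinal.mk L :=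
  stmt6_general n hopc A hA
end

section
/- Let L be an infinite flat bounded lattice, regarded as a structure for the first-order language with two binary function symbols interpreted as the lattice operations ⊓ and ⊔ and two constant symbols interpreted as ⊥ and ⊤. Then for every n ∈ ℕ, every monotone function f : Lⁿ → L whose graph {(x₁,…,xₙ,y) ∈ L^{n+1} : f(x₁,…,xₙ) = y} is definable in this structure by a first-order formula with parameters from L is an n-ary polynomial function on L. -/
universe u

open FirstOrder

/-- Function symbols of the language of bounded lattices: two constants
(`false` for `⊥`, `true` for `⊤`) and two binary operations (`false` for `⊓`,
`true` for `⊔`). -/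
def boundedLatticeFun : ℕ → Type
  | 0 => Bool
  | 2 => Bool
  | _ => Empty

/-- The first-order language with two binary function symbols and two constant
symbols (for `⊓`, `⊔`, `⊥`, `⊤`). -/
def boundedLatticeLang : Language :=
  ⟨boundedLatticeFun, fun _ => Empty⟩

/-- The natural `boundedLatticeLang`-structure on a bounded lattice. -/
def boundedLatticeStructure (L : Type u) [Lattice L] [BoundedOrder L] :
    boundedLatticeLang.Structure L where
  funMap {n} f x :=
    match n, f, x with
    | 0, false, _ => ⊥
    | 0, true, _ => ⊤
    | 1, f, _ => f.elim
    | 2, false, x => x 0 ⊓ x 1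
    | 2, true, x => x 0 ⊔ x 1
    | (_ + 3), f, _ => f.elim
  RelMap {n} r _ := r.elim

namespace Stmt7Aux

open Function Set

attribute [local instance] Classical.propDecidable

set_option linter.unusedSectionVars false

variable {L : Type u} [Lattice L] [BoundedOrder L]

/-- The "middle" elements of a bounded lattice. -/
def Mid (L : Type u) [Lattice L] [BoundedOrder L] : Set L := {w | w ≠ ⊥ ∧ w ≠ ⊤}

section Flat

variable (hflat : ∀ a b : L, a ≤ b → a = ⊥ ∨ b = ⊤ ∨ a = b)

include hflat

lemma flat_inf {u w : L} (hu : u ≠ ⊤) (hw : w ≠ ⊤) (hne : u ≠ w) : u ⊓ w = ⊥ := by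
  rcases hflat (u ⊓ w) u inf_le_left with h | h | h
  · exact h
  · exact absurd h hu
  · rcases hflat (u ⊓ w) w inf_le_right with h' | h' | h'
    · exact h'
    · exact absurd h' hw
    · exact absurd (h.symm.trans h') hne

lemma flat_sup {u w : L} (hu : u ≠ ⊥) (hw : w ≠ ⊥) (hne : u ≠ w) : u ⊔ w = ⊤ := by
  rcases hflat u (u ⊔ w) le_sup_left with h | h | h
  · exact absurd h hu
  · exact h
  · rcases hflat w (u ⊔ w) le_sup_right with h' | h' | h'
    · exact absurd h' hw
    · exact h'
    · exact absurd (h.trans h'.symm) hne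

lemma flat_eq_of_inf_ne_bot {u w : L} (h : u ⊓ w ≠ ⊥) (hu : u ≠ ⊤) (hw : w ≠ ⊤) : u = w := by
  by_contra hne
  exact h (flat_inf hflat hu hw hne)

lemma flat_top_of_two {a b c : L} (hac : a ≤ c) (hbc : b ≤ c) (hab : a ≠ b)
    (ha : a ≠ ⊥) (hb : b ≠ ⊥) : c = ⊤ := by
  rcases hflat a c hac with h | h | h
  · exact absurd h ha
  · exact h
  · subst h
    rcases hflat b a hbc with h' | h' | h'
    · exact absurd h' hb
    · exact h'
    · exact absurd h'.symm hab

/-- Swapping two middle elements is an order automorphism of a flat lattice. -/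
noncomputable def swapIso (a b : L) (ha : a ∈ Mid L) (hb : b ∈ Mid L) : L ≃o L where
  toEquiv := Equiv.swap a b
  map_rel_iff' := by
    have mono : ∀ x y : L, x ≤ y → Equiv.swap a b x ≤ Equiv.swap a b y := by
      intro x y hxy
      rcases hflat x y hxy with h | h | h
      · subst h
        rw [Equiv.swap_apply_of_ne_of_ne (Ne.symm ha.1) (Ne.symm hb.1)]
        exact bot_le
      · subst h
        rw [Equiv.swap_apply_of_ne_of_ne (Ne.symm ha.2) (Ne.symm hb.2)]
        exact le_top
      · subst h; exact le_rfl
    intro x y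
    constructor
    · intro h
      have := mono _ _ h
      simpa [Equiv.swap_apply_self] using this
    · exact mono x y

@[simp] lemma swapIso_apply (a b : L) (ha hb) (x : L) :
    swapIso hflat a b ha hb x = Equiv.swap a b x := rfl

/-- Composition of disjoint swaps: moving an injective tuple of middle elements to a
disjoint injective tuple of middle elements. -/
lemma ms0 : ∀ (k : ℕ) (v t : Fin k → L), Function.Injective v → Function.Injective t →
    (∀ j, v j ∈ Mid L) → (∀ j, t j ∈ Mid L) → (∀ j j', v j ≠ t j') →
    ∃ σ : L ≃o L, (∀ j, σ (v j) = t j) ∧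
      (∀ y : L, (∀ j, y ≠ v j) → (∀ j, y ≠ t j) → σ y = y) := by
  intro k
  induction k with
  | zero =>
    intro v t _ _ _ _ _
    exact ⟨OrderIso.refl L, fun j => j.elim0, fun y _ _ => rfl⟩
  | succ k ih =>
    intro v t hv ht hvM htM hd
    obtain ⟨σ', hσ'1, hσ'2⟩ := ih (v ∘ Fin.castSucc) (t ∘ Fin.castSucc)
      (hv.comp (Fin.castSucc_injective k)) (ht.comp (Fin.castSucc_injective k))
      (fun j => hvM _) (fun j => htM _) (fun j j' => hd _ _)
    refine ⟨σ'.trans (swapIso hflat (v (Fin.last k)) (t (Fin.last k)) (hvM _) (htM _)), ?_, ?_⟩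
    · intro j
      refine Fin.lastCases ?_ ?_ j
      · have h1 : σ' (v (Fin.last k)) = v (Fin.last k) := by
          refine hσ'2 _ (fun j h => ?_) (fun j => hd _ _)
          exact absurd (hv h) (Fin.castSucc_lt_last j).ne'
        show (swapIso hflat (v (Fin.last k)) (t (Fin.last k)) (hvM _) (htM _))
          (σ' (v (Fin.last k))) = t (Fin.last k)
        rw [h1, swapIso_apply]
        exact Equiv.swap_apply_left _ _
      · intro i
        show (swapIso hflat (v (Fin.last k)) (t (Fin.last k)) (hvM _) (htM _))
          (σ' ((v ∘ Fin.castSucc) i)) = t i.castSucc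
        rw [hσ'1 i, swapIso_apply]
        refine Equiv.swap_apply_of_ne_of_ne (Ne.symm (hd _ _)) (fun h => ?_)
        exact absurd (ht h) (Fin.castSucc_lt_last i).ne
    · intro y hyv hyt
      show (swapIso hflat (v (Fin.last k)) (t (Fin.last k)) (hvM _) (htM _)) (σ' y) = y
      rw [hσ'2 y (fun j => hyv _) (fun j => hyt _), swapIso_apply]
      exact Equiv.swap_apply_of_ne_of_ne (hyv _) (hyt _)

omit hflat in
lemma mid_infinite [Infinite L] : (Mid L).Infinite := by
  have h : Mid L = (Set.univ : Set L) \ {⊥, ⊤} := by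
    ext w
    simp only [Mid, Set.mem_diff, Set.mem_univ, true_and, Set.mem_insert_iff,
      Set.mem_singleton_iff, Set.mem_setOf_eq]
    tauto
  rw [h]
  exact Set.infinite_univ.diff (Set.Finite.insert _ (Set.finite_singleton _))

omit hflat in
lemma exists_fresh [Infinite L] (F : Set L) (hF : F.Finite) :
    ∃ w : L, w ∈ Mid L ∧ w ∉ F := by
  have := (mid_infinite (L := L)).diff hF
  obtain ⟨w, hw⟩ := this.nonempty
  exact ⟨w, hw.1, hw.2⟩

/-- Moving an injective tuple of middle elements to another injective tuple of middle
elements by an order automorphism fixing a given finite set. -/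
lemma ms [Infinite L] (k : ℕ) (v t : Fin k → L) (F : Finset L)
    (hv : Function.Injective v) (ht : Function.Injective t)
    (hvM : ∀ j, v j ∈ Mid L) (htM : ∀ j, t j ∈ Mid L)
    (hFv : ∀ j, v j ∉ F) (hFt : ∀ j, t j ∉ F) :
    ∃ σ : L ≃o L, (∀ j, σ (v j) = t j) ∧ (∀ y ∈ F, σ y = y) := by
  have hG : (Mid L \ (↑F ∪ Set.range v ∪ Set.range t)).Infinite :=
    mid_infinite.diff (((F.finite_toSet.union (Set.finite_range v))).union
      (Set.finite_range t))
  set G := Mid L \ (↑F ∪ Set.range v ∪ Set.range t) with hGdef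
  let e := hG.natEmbedding
  let u : Fin k → L := fun j => (e (j : ℕ) : L)
  have hu : Function.Injective u := by
    intro j j' h
    have := e.injective (Subtype.ext h)
    exact Fin.ext (by exact_mod_cast this)
  have huG : ∀ j, u j ∈ G := fun j => (e (j : ℕ)).2
  have huM : ∀ j, u j ∈ Mid L := fun j => (huG j).1
  have huv : ∀ j j', u j ≠ v j' := by
    intro j j' h
    exact (huG j).2 (Or.inl (Or.inr ⟨j', h.symm⟩))
  have hut : ∀ j j', u j ≠ t j' := by
    intro j j' h
    exact (huG j).2 (Or.inr ⟨j', h.symm⟩)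
  have huF : ∀ j, u j ∉ F := by
    intro j h
    exact (huG j).2 (Or.inl (Or.inl h))
  obtain ⟨σ₁, hσ₁1, hσ₁2⟩ := ms0 hflat k v u hv hu hvM huM (fun j j' => (huv j' j).symm)
  obtain ⟨σ₂, hσ₂1, hσ₂2⟩ := ms0 hflat k u t hu ht huM htM hut
  refine ⟨σ₁.trans σ₂, ?_, ?_⟩
  · intro j
    show σ₂ (σ₁ (v j)) = t j
    rw [hσ₁1 j, hσ₂1 j]
  · intro y hy
    show σ₂ (σ₁ y) = y
    rw [hσ₁2 y (fun j h => hFv j (h ▸ hy)) (fun j h => huF j (h ▸ hy)),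
      hσ₂2 y (fun j h => huF j (h ▸ hy)) (fun j h => hFt j (h ▸ hy))]

end Flat

section Gadgets

variable {n : ℕ}

/-- `dlt u x = ⊤` if `u x = ⊤` and `⊥` otherwise. -/
def dlt (a b a' b' : L) (u : (Fin n → L) → L) : (Fin n → L) → L :=
  fun x => ((u x ⊓ a) ⊔ (u x ⊓ b)) ⊓ ((u x ⊓ a') ⊔ (u x ⊓ b'))

/-- `eps u x = ⊥` if `u x = ⊥` and `⊤` otherwise. -/
def eps (a b a' b' : L) (u : (Fin n → L) → L) : (Fin n → L) → L :=
  fun x => ((u x ⊔ a) ⊓ (u x ⊔ b)) ⊔ ((u x ⊔ a') ⊓ (u x ⊔ b'))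

/-- `gp p u x = ⊥` if `u x ∈ {⊥, p}` and `⊤` otherwise. -/
def gp (a b p : L) (u : (Fin n → L) → L) : (Fin n → L) → L :=
  fun x => ((u x ⊔ p) ⊓ a) ⊔ ((u x ⊔ p) ⊓ b)

/-- `eta P u x = ⊥` if `u x ∈ {⊥} ∪ P` and `⊤` otherwise. -/
def eta (a b a' b' : L) (P : Finset L) (u : (Fin n → L) → L) : (Fin n → L) → L :=
  fun x => eps a b a' b' u x ⊓ P.inf (fun p => gp a b p u x)

variable {a b a' b' : L} (ha : a ∈ Mid L) (hb : b ∈ Mid L) (ha' : a' ∈ Mid L)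
  (hb' : b' ∈ Mid L) (hab : a ≠ b) (hab' : a' ≠ b') (haa' : a ≠ a') (hab'2 : a ≠ b')
  (hba' : b ≠ a') (hbb' : b ≠ b')
  (hflat : ∀ a b : L, a ≤ b → a = ⊥ ∨ b = ⊤ ∨ a = b)

include ha hb ha' hb' hab hab' haa' hab'2 hba' hbb' hflat

lemma dlt_top (u : (Fin n → L) → L) (x : Fin n → L) (h : u x = ⊤) :
    dlt a b a' b' u x = ⊤ := by
  unfold dlt
  rw [h, top_inf_eq, top_inf_eq, top_inf_eq, top_inf_eq,
    flat_sup hflat ha.1 hb.1 hab, flat_sup hflat ha'.1 hb'.1 hab', top_inf_eq]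

lemma dlt_bot (u : (Fin n → L) → L) (x : Fin n → L) (h : u x ≠ ⊤) :
    dlt a b a' b' u x = ⊥ := by
  unfold dlt
  set w := u x with hw
  by_cases hwa : w = a
  · have h1 : w ⊓ a' = ⊥ := flat_inf hflat h ha'.2 (hwa ▸ haa')
    have h2 : w ⊓ b' = ⊥ := flat_inf hflat h hb'.2 (hwa ▸ hab'2)
    rw [h1, h2, sup_idem, inf_bot_eq]
  · by_cases hwb : w = b
    · have h1 : w ⊓ a' = ⊥ := flat_inf hflat h ha'.2 (hwb ▸ hba')
      have h2 : w ⊓ b' = ⊥ := flat_inf hflat h hb'.2 (hwb ▸ hbb')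
      rw [h1, h2, sup_idem, inf_bot_eq]
    · have h1 : w ⊓ a = ⊥ := flat_inf hflat h ha.2 hwa
      have h2 : w ⊓ b = ⊥ := flat_inf hflat h hb.2 hwb
      rw [h1, h2, sup_idem, bot_inf_eq]

lemma eps_bot (u : (Fin n → L) → L) (x : Fin n → L) (h : u x = ⊥) :
    eps a b a' b' u x = ⊥ := by
  unfold eps
  rw [h, bot_sup_eq, bot_sup_eq, bot_sup_eq, bot_sup_eq,
    flat_inf hflat ha.2 hb.2 hab, flat_inf hflat ha'.2 hb'.2 hab', bot_sup_eq]

lemma eps_top (u : (Fin n → L) → L) (x : Fin n → L) (h : u x ≠ ⊥) :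
    eps a b a' b' u x = ⊤ := by
  unfold eps
  set w := u x with hw
  have sup_top : ∀ c : L, c ∈ Mid L → w ≠ c → w ⊔ c = ⊤ := by
    intro c hc hwc
    by_cases hwt : w = ⊤
    · rw [hwt, top_sup_eq]
    · exact flat_sup hflat h hc.1 hwc
  by_cases hwa : w = a
  · have h1 : w ⊔ a' = ⊤ := sup_top a' ha' (hwa ▸ haa')
    have h2 : w ⊔ b' = ⊤ := sup_top b' hb' (hwa ▸ hab'2)
    rw [h1, h2, inf_idem, sup_top_eq]
  · by_cases hwb : w = b
    · have h1 : w ⊔ a' = ⊤ := sup_top a' ha' (hwb ▸ hba')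
      have h2 : w ⊔ b' = ⊤ := sup_top b' hb' (hwb ▸ hbb')
      rw [h1, h2, inf_idem, sup_top_eq]
    · have h1 : w ⊔ a = ⊤ := sup_top a ha hwa
      have h2 : w ⊔ b = ⊤ := sup_top b hb hwb
      rw [h1, h2, inf_idem, top_sup_eq]

lemma gp_bot {p : L} (hp : p ∈ Mid L) (hpa : p ≠ a) (hpb : p ≠ b)
    (u : (Fin n → L) → L) (x : Fin n → L) (h : u x = ⊥ ∨ u x = p) :
    gp a b p u x = ⊥ := by
  unfold gp
  have hsp : u x ⊔ p = p := by
    rcases h with h | h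
    · rw [h, bot_sup_eq]
    · rw [h, sup_idem]
  rw [hsp, flat_inf hflat hp.2 ha.2 hpa, flat_inf hflat hp.2 hb.2 hpb, sup_idem]

lemma gp_top {p : L} (hp : p ∈ Mid L) (u : (Fin n → L) → L) (x : Fin n → L)
    (h1 : u x ≠ ⊥) (h2 : u x ≠ p) : gp a b p u x = ⊤ := by
  unfold gp
  have hsp : u x ⊔ p = ⊤ := by
    by_cases hwt : u x = ⊤
    · rw [hwt, top_sup_eq]
    · exact flat_sup hflat h1 hp.1 h2
  rw [hsp, top_inf_eq, top_inf_eq, flat_sup hflat ha.1 hb.1 hab]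

lemma eta_bot {P : Finset L} (hPM : ↑P ⊆ Mid L) (hPa : a ∉ P) (hPb : b ∉ P)
    (u : (Fin n → L) → L) (x : Fin n → L) (h : u x = ⊥ ∨ u x ∈ P) :
    eta a b a' b' P u x = ⊥ := by
  unfold eta
  rcases h with h | h
  · rw [eps_bot ha hb ha' hb' hab hab' haa' hab'2 hba' hbb' hflat u x h, bot_inf_eq]
  · refine le_bot_iff.mp (le_trans inf_le_right (le_trans (Finset.inf_le h) ?_))
    rw [gp_bot ha hb ha' hb' hab hab' haa' hab'2 hba' hbb' hflat (hPM h) (fun hc => hPa (hc ▸ h)) (fun hc => hPb (hc ▸ h)) u x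
      (Or.inr rfl)]

lemma eta_top {P : Finset L} (hPM : ↑P ⊆ Mid L)
    (u : (Fin n → L) → L) (x : Fin n → L) (h1 : u x ≠ ⊥) (h2 : u x ∉ P) :
    eta a b a' b' P u x = ⊤ := by
  unfold eta
  rw [eps_top ha hb ha' hb' hab hab' haa' hab'2 hba' hbb' hflat u x h1, top_inf_eq]
  refine le_antisymm le_top (Finset.le_inf fun p hp => ?_)
  rw [gp_top ha hb ha' hb' hab hab' haa' hab'2 hba' hbb' hflat (hPM hp) u x h1 (fun hc => h2 (hc ▸ hp))]

end Gadgets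

section Poly

variable {n : ℕ}

lemma finset_inf_eq_top {ι : Type*} (s : Finset ι) (g : ι → L) (h : ∀ i ∈ s, g i = ⊤) :
    s.inf g = ⊤ :=
  le_antisymm le_top (Finset.le_inf fun i hi => (h i hi).ge)

lemma finset_inf_eq_const {ι : Type*} (s : Finset ι) (g : ι → L) (c : L) (hne : s.Nonempty)
    (h : ∀ i ∈ s, g i = c) : s.inf g = c :=
  le_antisymm (le_trans (Finset.inf_le hne.choose_spec) (h _ hne.choose_spec).le)
    (Finset.le_inf fun i hi => (h i hi).ge)

lemma poly_finsetSup {ι : Type*} (s : Finset ι) (g : ι → (Fin n → L) → L)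
    (h : ∀ i ∈ s, IsLatticePolynomial (g i)) :
    IsLatticePolynomial (fun x => s.sup (fun i => g i x)) := by
  classical
  induction s using Finset.induction_on with
  | empty => simpa using IsLatticePolynomial.const (⊥ : L)
  | @insert j s hj ih =>
    simp only [Finset.sup_insert]
    exact (h j (Finset.mem_insert_self j s)).sup
      (ih fun i hi => h i (Finset.mem_insert_of_mem hi))

lemma poly_finsetInf {ι : Type*} (s : Finset ι) (g : ι → (Fin n → L) → L)
    (h : ∀ i ∈ s, IsLatticePolynomial (g i)) :
    IsLatticePolynomial (fun x => s.inf (fun i => g i x)) := by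
  classical
  induction s using Finset.induction_on with
  | empty => simpa using IsLatticePolynomial.const (⊤ : L)
  | @insert j s hj ih =>
    simp only [Finset.inf_insert]
    exact (h j (Finset.mem_insert_self j s)).inf
      (ih fun i hi => h i (Finset.mem_insert_of_mem hi))

variable {a b a' b' : L}

lemma dlt_poly {u : (Fin n → L) → L} (hu : IsLatticePolynomial u) :
    IsLatticePolynomial (dlt a b a' b' u) :=
  ((hu.inf (.const a)).sup (hu.inf (.const b))).inf ((hu.inf (.const a')).sup (hu.inf (.const b')))

lemma eps_poly {u : (Fin n → L) → L} (hu : IsLatticePolynomial u) :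
    IsLatticePolynomial (eps a b a' b' u) :=
  ((hu.sup (.const a)).inf (hu.sup (.const b))).sup ((hu.sup (.const a')).inf (hu.sup (.const b')))

lemma gp_poly {p : L} {u : (Fin n → L) → L} (hu : IsLatticePolynomial u) :
    IsLatticePolynomial (gp a b p u) :=
  ((hu.sup (.const p)).inf (.const a)).sup ((hu.sup (.const p)).inf (.const b))

lemma eta_poly {P : Finset L} {u : (Fin n → L) → L} (hu : IsLatticePolynomial u) :
    IsLatticePolynomial (eta a b a' b' P u) :=
  (eps_poly hu).inf (poly_finsetInf P _ (fun p _ => gp_poly hu))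

end Poly

section Key

variable {n : ℕ} (P : Finset L) (a b a' b' : L) (f : (Fin n → L) → L)

/-- Indicator factors for single coordinates. -/
noncomputable def kone (z : Fin n → L) (i : Fin n) : (Fin n → L) → L :=
  if z i = ⊤ then dlt a b a' b' (fun x => x i)
  else if z i ∈ P then eps a b a' b' (fun x => x i ⊓ z i)
  else if z i = ⊥ then fun _ => ⊤
  else eta a b a' b' P (fun x => x i)

/-- Indicator factors for pairs of coordinates. -/
noncomputable def ktwo (z : Fin n → L) (i j : Fin n) : (Fin n → L) → L :=
  if (z i ∉ P ∧ z i ≠ ⊥ ∧ z i ≠ ⊤) ∧ (z j ∉ P ∧ z j ≠ ⊥ ∧ z j ≠ ⊤) then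
    (if z i = z j then eps a b a' b' (fun x => x i ⊓ x j)
     else dlt a b a' b' (fun x => x i ⊔ x j))
  else fun _ => ⊤

noncomputable def bigK (z : Fin n → L) : (Fin n → L) → L :=
  fun x => (Finset.univ.inf fun i => kone P a b a' b' z i x) ⊓
    (Finset.univ.inf fun ij : Fin n × Fin n => ktwo P a b a' b' z ij.1 ij.2 x)

noncomputable def Vz (z : Fin n → L) : (Fin n → L) → L :=
  if f z = ⊥ ∨ f z = ⊤ ∨ f z ∈ P then fun _ => f z
  else fun x => (Finset.univ.filter fun i => z i = f z).inf x

noncomputable def Jz (z : Fin n → L) : (Fin n → L) → L :=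
  fun x => Vz P f z x ⊓ bigK P a b a' b' z x

lemma Jz_poly (z : Fin n → L) : IsLatticePolynomial (Jz P a b a' b' f z) := by
  have hV : IsLatticePolynomial (Vz P f z) := by
    unfold Vz
    split_ifs
    · exact .const _
    · exact poly_finsetInf _ (fun i => fun x => x i) (fun i _ => .proj i)
  have hK : IsLatticePolynomial (bigK P a b a' b' z) := by
    have h1 : IsLatticePolynomial (fun x => Finset.univ.inf fun i => kone P a b a' b' z i x) := by
      refine poly_finsetInf _ _ (fun i _ => ?_)
      unfold kone
      split_ifs
      · exact dlt_poly (.proj i)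
      · exact eps_poly ((IsLatticePolynomial.proj i).inf (.const (z i)))
      · exact .const ⊤
      · exact eta_poly (.proj i)
    have h2 : IsLatticePolynomial
        (fun x => Finset.univ.inf fun ij : Fin n × Fin n => ktwo P a b a' b' z ij.1 ij.2 x) := by
      refine poly_finsetInf _ _ (fun ij _ => ?_)
      unfold ktwo
      split_ifs
      · exact eps_poly ((IsLatticePolynomial.proj ij.1).inf (.proj ij.2))
      · exact dlt_poly ((IsLatticePolynomial.proj ij.1).sup (.proj ij.2))
      · exact .const ⊤
    exact h1.inf h2
  exact hV.inf hK

variable [Infinite L]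
  (hflat : ∀ a b : L, a ≤ b → a = ⊥ ∨ b = ⊤ ∨ a = b)
  (hPM : ↑P ⊆ Mid L)
  (ha : a ∈ Mid L) (hb : b ∈ Mid L) (ha' : a' ∈ Mid L) (hb' : b' ∈ Mid L)
  (hab : a ≠ b) (hab' : a' ≠ b') (haa' : a ≠ a') (hab'2 : a ≠ b')
  (hba' : b ≠ a') (hbb' : b ≠ b') (haP : a ∉ P) (hbP : b ∉ P)
  (hf : Monotone f)
  (heq : ∀ σ : L ≃o L, (∀ p ∈ P, σ p = p) → ∀ x : Fin n → L, f (⇑σ ∘ x) = σ (f x))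

include hflat heq in
lemma fresh (z : Fin n → L) : f z = ⊥ ∨ f z = ⊤ ∨ f z ∈ P ∨ ∃ i, z i = f z := by
  by_contra hc
  push_neg at hc
  obtain ⟨h1, h2, h3, h4⟩ := hc
  obtain ⟨d, hdM, hdF⟩ := exists_fresh (L := L) (↑P ∪ Set.range z ∪ {f z})
    ((P.finite_toSet.union (Set.finite_range z)).union (Set.finite_singleton _))
  have hfzM : f z ∈ Mid L := ⟨h1, h2⟩
  have hfix : ∀ p ∈ P, (swapIso hflat (f z) d hfzM hdM) p = p := by
    intro p hp
    rw [swapIso_apply]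
    exact Equiv.swap_apply_of_ne_of_ne (fun hc => h3 (hc ▸ hp))
      (fun hc => hdF (Or.inl (Or.inl (hc ▸ hp))))
  have hz : ⇑(swapIso hflat (f z) d hfzM hdM) ∘ z = z := by
    funext i
    show (swapIso hflat (f z) d hfzM hdM) (z i) = z i
    rw [swapIso_apply]
    exact Equiv.swap_apply_of_ne_of_ne (h4 i) (fun hc => hdF (Or.inl (Or.inr ⟨i, hc⟩)))
  have := heq (swapIso hflat (f z) d hfzM hdM) hfix z
  rw [hz, swapIso_apply, Equiv.swap_apply_left] at this
  exact hdF (Or.inr (this ▸ rfl))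

include hflat hPM ha hb ha' hb' hab hab' haa' hab'2 hba' hbb' haP hbP hf heq in
lemma lemB (z x : Fin n → L) : Jz P a b a' b' f z x ≤ f x := by
  classical
  -- Condition 1
  by_cases h1 : ∀ i, z i = ⊤ → x i = ⊤
  swap
  · push_neg at h1
    obtain ⟨i, hzi, hxi⟩ := h1
    have hk : kone P a b a' b' z i x = ⊥ := by
      rw [kone, if_pos hzi]
      exact dlt_bot ha hb ha' hb' hab hab' haa' hab'2 hba' hbb' hflat _ x hxi
    refine le_trans (le_trans inf_le_right (le_trans inf_le_left
      (le_trans (Finset.inf_le (Finset.mem_univ i)) hk.le))) bot_le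
  -- Condition 2
  by_cases h2 : ∀ i, z i ∈ P → z i ≤ x i
  swap
  · push_neg at h2
    obtain ⟨i, hzi, hxi⟩ := h2
    have hmeet : x i ⊓ z i = ⊥ := by
      rcases hflat (x i ⊓ z i) (z i) inf_le_right with h | h | h
      · exact h
      · exact absurd h (hPM hzi).2
      · exact absurd (h ▸ inf_le_left) hxi
    have hk : kone P a b a' b' z i x = ⊥ := by
      rw [kone, if_neg (hPM hzi).2, if_pos hzi]
      exact eps_bot ha hb ha' hb' hab hab' haa' hab'2 hba' hbb' hflat _ x hmeet
    refine le_trans (le_trans inf_le_right (le_trans inf_le_left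
      (le_trans (Finset.inf_le (Finset.mem_univ i)) hk.le))) bot_le
  -- Condition 3
  by_cases h3 : ∀ i, (z i ∉ P ∧ z i ≠ ⊥ ∧ z i ≠ ⊤) → (x i ≠ ⊥ ∧ x i ∉ P)
  swap
  · push_neg at h3
    obtain ⟨i, hzi, hxi⟩ := h3
    have hk : kone P a b a' b' z i x = ⊥ := by
      rw [kone, if_neg hzi.2.2, if_neg hzi.1, if_neg hzi.2.1]
      refine eta_bot ha hb ha' hb' hab hab' haa' hab'2 hba' hbb' hflat hPM haP hbP _ x ?_
      by_cases hxb : x i = ⊥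
      · exact Or.inl hxb
      · exact Or.inr (hxi hxb)
    refine le_trans (le_trans inf_le_right (le_trans inf_le_left
      (le_trans (Finset.inf_le (Finset.mem_univ i)) hk.le))) bot_le
  -- Condition 4
  by_cases h4 : ∀ i j, (z i ∉ P ∧ z i ≠ ⊥ ∧ z i ≠ ⊤) → z j = z i → x i ⊓ x j ≠ ⊥
  swap
  · push_neg at h4
    obtain ⟨i, j, hzi, hzj, hxij⟩ := h4
    have hk : ktwo P a b a' b' z i j x = ⊥ := by
      rw [ktwo, if_pos ⟨hzi, hzj ▸ hzi⟩, if_pos hzj.symm]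
      exact eps_bot ha hb ha' hb' hab hab' haa' hab'2 hba' hbb' hflat _ x hxij
    refine le_trans (le_trans inf_le_right (le_trans inf_le_right
      (le_trans (Finset.inf_le (Finset.mem_univ (i, j))) hk.le))) bot_le
  -- Condition 5
  by_cases h5 : ∀ i j, (z i ∉ P ∧ z i ≠ ⊥ ∧ z i ≠ ⊤) → (z j ∉ P ∧ z j ≠ ⊥ ∧ z j ≠ ⊤) →
      z i ≠ z j → x i ⊔ x j = ⊤
  swap
  · push_neg at h5
    obtain ⟨i, j, hzi, hzj, hne, hxij⟩ := h5
    have hk : ktwo P a b a' b' z i j x = ⊥ := by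
      rw [ktwo, if_pos ⟨hzi, hzj⟩, if_neg hne]
      exact dlt_bot ha hb ha' hb' hab hab' haa' hab'2 hba' hbb' hflat _ x hxij
    refine le_trans (le_trans inf_le_right (le_trans inf_le_right
      (le_trans (Finset.inf_le (Finset.mem_univ (i, j))) hk.le))) bot_le
  -- Positive case: all conditions hold.
  set A : Finset L := (Finset.univ.image z).filter (fun w => w ∉ P ∧ w ≠ ⊥ ∧ w ≠ ⊤) with hA
  have hAmem : ∀ w ∈ A, (∃ i, z i = w) ∧ w ∉ P ∧ w ≠ ⊥ ∧ w ≠ ⊤ := by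
    intro w hw
    rw [hA, Finset.mem_filter, Finset.mem_image] at hw
    exact ⟨by simpa using hw.1, hw.2⟩
  have hAmem' : ∀ i, z i ∉ P → z i ≠ ⊥ → z i ≠ ⊤ → z i ∈ A := by
    intro i hp hbb htt
    rw [hA, Finset.mem_filter, Finset.mem_image]
    exact ⟨⟨i, Finset.mem_univ i, rfl⟩, hp, hbb, htt⟩
  have hG : (Mid L \ (↑P ∪ Set.range x ∪ ↑A)).Infinite :=
    mid_infinite.diff ((P.finite_toSet.union (Set.finite_range x)).union A.finite_toSet)
  set e := hG.natEmbedding with he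
  have heM : ∀ m : ℕ, ((e m : L) ∈ Mid L) ∧ (e m : L) ∉ ↑P ∧ (e m : L) ∉ Set.range x ∧
      (e m : L) ∉ ↑A := by
    intro m
    have := (e m).2
    exact ⟨this.1, fun h => this.2 (Or.inl (Or.inl h)), fun h => this.2 (Or.inl (Or.inr h)),
      fun h => this.2 (Or.inr h)⟩
  set tf : ℕ → L → L := fun s w =>
    if h : ∃ i, z i = w ∧ x i ≠ ⊤ then x h.choose
    else if hw : w ∈ A then (e (2 * ((A.equivFin ⟨w, hw⟩ : Fin A.card) : ℕ) + s) : L)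
    else w with htf
  -- basic facts about tf
  have huniq : ∀ w ∈ A, ∀ (h : ∃ i, z i = w ∧ x i ≠ ⊤), ∀ i, z i = w → x i ≠ ⊤ →
      x i = x h.choose := by
    intro w hwA h i hzi hxi
    obtain ⟨hz2, hx2⟩ := h.choose_spec
    obtain ⟨-, hwP, hwb, hwt⟩ := hAmem w hwA
    refine flat_eq_of_inf_ne_bot hflat ?_ hxi hx2
    exact h4 i h.choose ⟨by rw [hzi]; exact hwP, by rw [hzi]; exact hwb, by rw [hzi]; exact hwt⟩
      (hz2.trans hzi.symm)
  have htfA : ∀ s : ℕ, ∀ w ∈ A, (tf s w ∈ Mid L) ∧ tf s w ∉ P := by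
    intro s w hwA
    rw [htf]
    dsimp only
    split_ifs with hex hwa
    · obtain ⟨hz2, hx2⟩ := hex.choose_spec
      obtain ⟨-, hwP, hwb, hwt⟩ := hAmem w hwA
      have := h3 hex.choose ⟨by rw [hz2]; exact hwP, by rw [hz2]; exact hwb,
        by rw [hz2]; exact hwt⟩
      exact ⟨⟨this.1, hx2⟩, this.2⟩
    · exact ⟨(heM _).1, (heM _).2.1⟩
  have htfinj : ∀ s : ℕ, ∀ w ∈ A, ∀ w' ∈ A, tf s w = tf s w' → w = w' := by
    intro s w hwA w' hw'A hEq
    by_contra hne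
    rw [htf] at hEq
    dsimp only at hEq
    obtain ⟨-, hwP, hwb, hwt⟩ := hAmem w hwA
    obtain ⟨-, hw'P, hw'b, hw't⟩ := hAmem w' hw'A
    split_ifs at hEq with hex hex' hex' hwa hw'a hw'a
    · obtain ⟨hz2, hx2⟩ := hex.choose_spec
      obtain ⟨hz2', hx2'⟩ := hex'.choose_spec
      have hsup : x hex.choose ⊔ x hex'.choose = ⊤ := by
        refine h5 hex.choose hex'.choose ⟨by rw [hz2]; exact hwP, by rw [hz2]; exact hwb,
            by rw [hz2]; exact hwt⟩ ⟨by rw [hz2']; exact hw'P, by rw [hz2']; exact hw'b,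
            by rw [hz2']; exact hw't⟩ ?_
        rw [hz2, hz2']
        exact fun h => hne h
      rw [hEq, sup_idem] at hsup
      exact hx2' hsup
    · exact (heM _).2.2.1 (⟨hex.choose, hEq⟩ : _ ∈ Set.range x)
    · exact (heM _).2.2.1 (⟨hex'.choose, hEq.symm⟩ : _ ∈ Set.range x)
    · have := e.injective (Subtype.ext hEq)
      have h2' : (A.equivFin ⟨w, hwA⟩ : ℕ) = (A.equivFin ⟨w', hw'A⟩ : ℕ) := by omega
      have := A.equivFin.injective (Fin.ext h2')
      exact hne (congrArg Subtype.val this)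
  -- build the automorphisms
  have hms : ∀ s : ℕ, ∃ σ : L ≃o L, (∀ w ∈ A, σ w = tf s w) ∧ (∀ p ∈ P, σ p = p) := by
    intro s
    obtain ⟨σ, hσ1, hσ2⟩ := ms hflat A.card (fun j => ((A.equivFin.symm j : ↥A) : L))
      (fun j => tf s ((A.equivFin.symm j : ↥A) : L)) P
      (fun j j' h => A.equivFin.symm.injective (Subtype.ext h))
      (fun j j' h => by
        have := htfinj s _ (A.equivFin.symm j).2 _ (A.equivFin.symm j').2 h
        exact A.equivFin.symm.injective (Subtype.ext this))
      (fun j => by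
        obtain ⟨-, h1', h2', h3'⟩ := hAmem _ (A.equivFin.symm j).2
        exact ⟨h2', h3'⟩)
      (fun j => (htfA s _ (A.equivFin.symm j).2).1)
      (fun j => (hAmem _ (A.equivFin.symm j).2).2.1)
      (fun j => (htfA s _ (A.equivFin.symm j).2).2)
    refine ⟨σ, ?_, hσ2⟩
    intro w hwA
    have := hσ1 (A.equivFin ⟨w, hwA⟩)
    rwa [Equiv.symm_apply_apply] at this
  obtain ⟨σ₀, hσ₀A, hσ₀P⟩ := hms 0
  obtain ⟨σ₁, hσ₁A, hσ₁P⟩ := hms 1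
  -- σ ∘ z ≤ x for both automorphisms
  have hle : ∀ (σ : L ≃o L) (s : ℕ), (∀ w ∈ A, σ w = tf s w) → (∀ p ∈ P, σ p = p) →
      ⇑σ ∘ z ≤ x := by
    intro σ s hσA hσP
    intro i
    show σ (z i) ≤ x i
    by_cases hzt : z i = ⊤
    · rw [hzt, map_top]
      rw [h1 i hzt]
    · by_cases hzP : z i ∈ P
      · rw [hσP _ hzP]
        exact h2 i hzP
      · by_cases hzb : z i = ⊥
        · rw [hzb, map_bot]
          exact bot_le
        · have hzA : z i ∈ A := hAmem' i hzP hzb hzt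
          rw [hσA _ hzA]
          by_cases hxt : x i = ⊤
          · rw [hxt]; exact le_top
          · have hex : ∃ j, z j = z i ∧ x j ≠ ⊤ := ⟨i, rfl, hxt⟩
            have : tf s (z i) = x hex.choose := by
              rw [htf]; dsimp only; rw [dif_pos hex]
            rw [this, ← huniq _ hzA hex i rfl hxt]
  have hle₀ := hle σ₀ 0 hσ₀A hσ₀P
  have hle₁ := hle σ₁ 1 hσ₁A hσ₁P
  have hfx₀ : σ₀ (f z) ≤ f x := by
    rw [← heq σ₀ hσ₀P z]
    exact hf hle₀
  have hfx₁ : σ₁ (f z) ≤ f x := by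
    rw [← heq σ₁ hσ₁P z]
    exact hf hle₁
  -- conclude
  refine le_trans inf_le_left ?_
  rw [Vz]
  split_ifs with hc
  · rcases hc with hc | hc | hc
    · rw [hc]; exact bot_le
    · rw [hc]
      rw [hc, map_top] at hfx₀
      exact hfx₀
    · rw [← hσ₀P _ hc]
      exact hfx₀
  · push_neg at hc
    obtain ⟨hcb, hct, hcP⟩ := hc
    rcases fresh P f hflat heq z with h | h | h | h
    · exact absurd h hcb
    · exact absurd h hct
    · exact absurd h hcP
    · obtain ⟨i₀, hi₀⟩ := h
      have hcA : f z ∈ A := by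
        rw [← hi₀]
        exact hAmem' i₀ (by rw [hi₀]; exact hcP) (by rw [hi₀]; exact hcb) (by rw [hi₀]; exact hct)
      by_cases hex : ∃ i, z i = f z ∧ x i ≠ ⊤
      · obtain ⟨hz2, hx2⟩ := hex.choose_spec
        refine le_trans (Finset.inf_le (Finset.mem_filter.mpr ⟨Finset.mem_univ _, hz2⟩)) ?_
        have h1' : tf 0 (f z) = x hex.choose := by
          rw [htf]; dsimp only; rw [dif_pos hex]
        calc x hex.choose = tf 0 (f z) := h1'.symm
        _ = σ₀ (f z) := (hσ₀A _ hcA).symm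
        _ ≤ f x := hfx₀
      · have hval : ∀ s : ℕ,
            tf s (f z) = (e (2 * ((A.equivFin ⟨f z, hcA⟩ : Fin A.card) : ℕ) + s) : L) := by
          intro s; rw [htf]; dsimp only; rw [dif_neg hex, dif_pos hcA]
        have hne01 : σ₀ (f z) ≠ σ₁ (f z) := by
          rw [hσ₀A _ hcA, hσ₁A _ hcA, hval 0, hval 1]
          intro h
          have := e.injective (Subtype.ext h)
          omega
        have hbot0 : σ₀ (f z) ≠ ⊥ := by
          rw [hσ₀A _ hcA, hval 0]
          exact (heM _).1.1
        have hbot1 : σ₁ (f z) ≠ ⊥ := by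
          rw [hσ₁A _ hcA, hval 1]
          exact (heM _).1.1
        have htop : f x = ⊤ := flat_top_of_two hflat hfx₀ hfx₁ hne01 hbot0 hbot1
        rw [htop]
        exact le_top

end Key

/-- The main combinatorial theorem: a monotone function commuting with all order
automorphisms fixing a finite set `P` of middle elements is a lattice polynomial. -/
theorem key [Infinite L] (hbt : (⊥ : L) ≠ ⊤)
    (hflat : ∀ a b : L, a ≤ b → a = ⊥ ∨ b = ⊤ ∨ a = b)
    {n : ℕ} (P : Finset L) (hPM : ↑P ⊆ Mid L) (f : (Fin n → L) → L) (hf : Monotone f)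
    (heq : ∀ σ : L ≃o L, (∀ p ∈ P, σ p = p) → ∀ x : Fin n → L, f (⇑σ ∘ x) = σ (f x)) :
    IsLatticePolynomial f := by
  classical
  set ee := ((mid_infinite (L := L)).diff P.finite_toSet).natEmbedding with hee
  set cs : ℕ → L := fun m => (ee m : L) with hcs
  have hcsM : ∀ m, cs m ∈ Mid L := fun m => (ee m).2.1
  have hcsP : ∀ m, cs m ∉ P := fun m => (ee m).2.2
  have hcsinj : Function.Injective cs := fun m m' h => ee.injective (Subtype.ext h)
  set a := cs 0 with hadef
  set b := cs 1 with hbdef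
  set a' := cs 2 with ha'def
  set b' := cs 3 with hb'def
  set vv : Fin n → L := fun j => cs (4 + (j : ℕ)) with hvv
  have hvvM : ∀ j, vv j ∈ Mid L := fun j => hcsM _
  have hvvP : ∀ j, vv j ∉ P := fun j => hcsP _
  have hvvinj : Function.Injective vv := by
    intro j j' h
    have := hcsinj h
    exact Fin.ext (by omega)
  set E : Finset L := insert ⊥ (insert ⊤ (P ∪ Finset.image vv Finset.univ)) with hE
  set Z : Finset (Fin n → L) := Fintype.piFinset (fun _ => E) with hZ
  have ha : a ∈ Mid L := hcsM 0
  have hb : b ∈ Mid L := hcsM 1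
  have ha' : a' ∈ Mid L := hcsM 2
  have hb' : b' ∈ Mid L := hcsM 3
  have hab : a ≠ b := fun h => by simpa using hcsinj h
  have hab' : a' ≠ b' := fun h => by simpa using hcsinj h
  have haa' : a ≠ a' := fun h => by simpa using hcsinj h
  have hab'2 : a ≠ b' := fun h => by simpa using hcsinj h
  have hba' : b ≠ a' := fun h => by simpa using hcsinj h
  have hbb' : b ≠ b' := fun h => by simpa using hcsinj h
  suffices hEq : f = fun x => Z.sup (fun z => Jz P a b a' b' f z x) by
    rw [hEq]
    exact poly_finsetSup _ _ (fun z _ => Jz_poly P a b a' b' f z)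
  funext x
  refine le_antisymm ?_ (Finset.sup_le (fun z _ =>
    lemB P a b a' b' f hflat hPM ha hb ha' hb' hab hab' haa' hab'2 hba' hbb'
      (hcsP 0) (hcsP 1) hf heq z x))
  -- canonical representative
  have hfilne : ∀ i : Fin n, (Finset.univ.filter fun j => x j = x i).Nonempty :=
    fun i => ⟨i, Finset.mem_filter.mpr ⟨Finset.mem_univ i, rfl⟩⟩
  set rep : Fin n → Fin n := fun i => (Finset.univ.filter fun j => x j = x i).min' (hfilne i)
    with hrep
  have hrepval : ∀ i, x (rep i) = x i :=
    fun i => (Finset.mem_filter.mp (Finset.min'_mem _ (hfilne i))).2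
  have hrepeq : ∀ i j, x i = x j → rep i = rep j := by
    intro i j h
    apply le_antisymm
    · exact Finset.min'_le (Finset.univ.filter (fun j' : Fin n => x j' = x i)) (rep j)
        (Finset.mem_filter.mpr ⟨Finset.mem_univ _, (hrepval j).trans h.symm⟩)
    · exact Finset.min'_le (Finset.univ.filter (fun j' : Fin n => x j' = x j)) (rep i)
        (Finset.mem_filter.mpr ⟨Finset.mem_univ _, (hrepval i).trans h⟩)
  set z : Fin n → L := fun i => if x i ∉ P ∧ x i ≠ ⊥ ∧ x i ≠ ⊤ then vv (rep i) else x i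
    with hzdef
  set R : Finset (Fin n) :=
    Finset.univ.filter (fun j => (x j ∉ P ∧ x j ≠ ⊥ ∧ x j ≠ ⊤) ∧ rep j = j) with hR
  have hRmem : ∀ j ∈ R, (x j ∉ P ∧ x j ≠ ⊥ ∧ x j ≠ ⊤) ∧ rep j = j :=
    fun j hj => (Finset.mem_filter.mp hj).2
  obtain ⟨σ, hσ1, hσP⟩ := ms hflat R.card (fun jj => vv ((R.equivFin.symm jj : ↥R) : Fin n))
    (fun jj => x ((R.equivFin.symm jj : ↥R) : Fin n)) P
    (fun jj jj' h => R.equivFin.symm.injective (Subtype.ext (hvvinj h)))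
    (fun jj jj' h => by
      have h1 := hrepeq _ _ h
      rw [(hRmem _ (R.equivFin.symm jj).2).2, (hRmem _ (R.equivFin.symm jj').2).2] at h1
      exact R.equivFin.symm.injective (Subtype.ext h1))
    (fun jj => hvvM _)
    (fun jj => by
      obtain ⟨⟨h1, h2, h3⟩, -⟩ := hRmem _ (R.equivFin.symm jj).2
      exact ⟨h2, h3⟩)
    (fun jj => hvvP _)
    (fun jj => (hRmem _ (R.equivFin.symm jj).2).1.1)
  have hσR : ∀ j (hj : j ∈ R), σ (vv j) = x j := by
    intro j hj
    have := hσ1 (R.equivFin ⟨j, hj⟩)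
    rwa [Equiv.symm_apply_apply] at this
  have hfrbr : ∀ i, (x i ∉ P ∧ x i ≠ ⊥ ∧ x i ≠ ⊤) → z i = vv (rep i) ∧ rep i ∈ R := by
    intro i hfr
    constructor
    · rw [hzdef]; exact if_pos hfr
    · refine Finset.mem_filter.mpr ⟨Finset.mem_univ _, ?_, hrepeq _ _ (hrepval i)⟩
      rw [hrepval i]
      exact hfr
  have hxσz : x = ⇑σ ∘ z := by
    funext i
    show x i = σ (z i)
    by_cases hfr : x i ∉ P ∧ x i ≠ ⊥ ∧ x i ≠ ⊤
    · obtain ⟨hz1, hz2⟩ := hfrbr i hfr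
      rw [hz1, hσR _ hz2, hrepval i]
    · have hz1 : z i = x i := by rw [hzdef]; exact if_neg hfr
      rw [hz1]
      have : x i ∈ P ∨ x i = ⊥ ∨ x i = ⊤ := by tauto
      rcases this with h | h | h
      · rw [hσP _ h]
      · rw [h, map_bot]
      · rw [h, map_top]
  have hfz : f x = σ (f z) := by
    rw [hxσz]
    exact heq σ hσP z
  have hzfresh : ∀ i, (z i ∉ P ∧ z i ≠ ⊥ ∧ z i ≠ ⊤) →
      (x i ∉ P ∧ x i ≠ ⊥ ∧ x i ≠ ⊤) := by
    intro i hzp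
    by_cases hfr : x i ∉ P ∧ x i ≠ ⊥ ∧ x i ≠ ⊤
    · exact hfr
    · have hz1 : z i = x i := by rw [hzdef]; exact if_neg hfr
      rw [hz1] at hzp
      exact hzp
  have hzZ : z ∈ Z := by
    rw [hZ]
    refine Fintype.mem_piFinset.mpr (fun i => ?_)
    by_cases hfr : x i ∉ P ∧ x i ≠ ⊥ ∧ x i ≠ ⊤
    · rw [(hfrbr i hfr).1, hE]
      exact Finset.mem_insert_of_mem (Finset.mem_insert_of_mem (Finset.mem_union_right _
        (Finset.mem_image.mpr ⟨rep i, Finset.mem_univ _, rfl⟩)))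
    · have hz1 : z i = x i := by rw [hzdef]; exact if_neg hfr
      have : x i ∈ P ∨ x i = ⊥ ∨ x i = ⊤ := by tauto
      rw [hz1, hE]
      rcases this with h | h | h
      · exact Finset.mem_insert_of_mem (Finset.mem_insert_of_mem (Finset.mem_union_left _ h))
      · rw [h]; exact Finset.mem_insert_self _ _
      · rw [h]; exact Finset.mem_insert_of_mem (Finset.mem_insert_self _ _)
  -- evaluation of the indicators at x
  have konetop : ∀ i, kone P a b a' b' z i x = ⊤ := by
    intro i
    by_cases hfr : x i ∉ P ∧ x i ≠ ⊥ ∧ x i ≠ ⊤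
    · have hz1 := (hfrbr i hfr).1
      rw [kone, if_neg (by rw [hz1]; exact (hvvM (rep i)).2),
        if_neg (by rw [hz1]; exact hvvP (rep i)),
        if_neg (by rw [hz1]; exact (hvvM (rep i)).1)]
      exact eta_top ha hb ha' hb' hab hab' haa' hab'2 hba' hbb' hflat hPM _ x hfr.2.1 hfr.1
    · have hz1 : z i = x i := by rw [hzdef]; exact if_neg hfr
      have : x i ∈ P ∨ x i = ⊥ ∨ x i = ⊤ := by tauto
      rcases this with h | h | h
      · rw [kone, if_neg (by rw [hz1]; exact (hPM h).2), if_pos (by rw [hz1]; exact h)]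
        refine eps_top ha hb ha' hb' hab hab' haa' hab'2 hba' hbb' hflat _ x ?_
        show x i ⊓ z i ≠ ⊥
        rw [hz1, inf_idem]
        exact (hPM h).1
      · have c1 : z i ≠ ⊤ := by rw [hz1, h]; exact hbt
        have c2 : z i ∉ P := by rw [hz1, h]; exact fun hc => (hPM hc).1 rfl
        have c3 : z i = ⊥ := by rw [hz1]; exact h
        rw [kone, if_neg c1, if_neg c2, if_pos c3]
      · rw [kone, if_pos (by rw [hz1]; exact h)]
        exact dlt_top ha hb ha' hb' hab hab' haa' hab'2 hba' hbb' hflat _ x h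
  have ktwotop : ∀ i j : Fin n, ktwo P a b a' b' z i j x = ⊤ := by
    intro i j
    by_cases houter : (z i ∉ P ∧ z i ≠ ⊥ ∧ z i ≠ ⊤) ∧ (z j ∉ P ∧ z j ≠ ⊥ ∧ z j ≠ ⊤)
    · have hfi := hzfresh i houter.1
      have hfj := hzfresh j houter.2
      have hzi := (hfrbr i hfi).1
      have hzj := (hfrbr j hfj).1
      by_cases hzeq : z i = z j
      · rw [ktwo, if_pos houter, if_pos hzeq]
        refine eps_top ha hb ha' hb' hab hab' haa' hab'2 hba' hbb' hflat _ x ?_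
        show x i ⊓ x j ≠ ⊥
        have hrr : rep i = rep j := hvvinj (by rw [← hzi, ← hzj]; exact hzeq)
        have hxx : x i = x j := by rw [← hrepval i, ← hrepval j, hrr]
        rw [hxx, inf_idem]
        exact hfj.2.1
      · rw [ktwo, if_pos houter, if_neg hzeq]
        refine dlt_top ha hb ha' hb' hab hab' haa' hab'2 hba' hbb' hflat _ x ?_
        show x i ⊔ x j = ⊤
        have hxx : x i ≠ x j := by
          intro h
          exact hzeq (by rw [hzi, hzj, hrepeq _ _ h])
        exact flat_sup hflat hfi.2.1 hfj.2.1 hxx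
    · rw [ktwo, if_neg houter]
  have hK : bigK P a b a' b' z x = ⊤ := by
    rw [bigK]
    rw [finset_inf_eq_top _ _ (fun i _ => konetop i),
      finset_inf_eq_top _ _ (fun ij _ => ktwotop ij.1 ij.2), inf_idem]
  have hV : Vz P f z x = f x := by
    rw [Vz]
    split_ifs with hc
    · show f z = f x
      have hfix : σ (f z) = f z := by
        rcases hc with hc | hc | hc
        · rw [hc, map_bot]
        · rw [hc, map_top]
        · exact hσP _ hc
      rw [hfz, hfix]
    · show (Finset.univ.filter fun i => z i = f z).inf x = f x
      push_neg at hc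
      obtain ⟨hcb, hct, hcP⟩ := hc
      rcases fresh P f hflat heq z with h | h | h | h
      · exact absurd h hcb
      · exact absurd h hct
      · exact absurd h hcP
      · obtain ⟨i₀, hi₀⟩ := h
        have hfr0 : z i₀ ∉ P ∧ z i₀ ≠ ⊥ ∧ z i₀ ≠ ⊤ :=
          ⟨by rw [hi₀]; exact hcP, by rw [hi₀]; exact hcb, by rw [hi₀]; exact hct⟩
        have hx0 := hzfresh i₀ hfr0
        have hz0 := (hfrbr i₀ hx0).1
        have hr0 := (hfrbr i₀ hx0).2
        have hval : ∀ i ∈ Finset.univ.filter (fun i => z i = f z), x i = x (rep i₀) := by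
          intro i hi
          have hzi : z i = f z := (Finset.mem_filter.mp hi).2
          have hfri : z i ∉ P ∧ z i ≠ ⊥ ∧ z i ≠ ⊤ :=
            ⟨by rw [hzi]; exact hcP, by rw [hzi]; exact hcb, by rw [hzi]; exact hct⟩
          have hxi := hzfresh i hfri
          have hzi1 := (hfrbr i hxi).1
          have hrr : rep i = rep i₀ := hvvinj (by rw [← hzi1, ← hz0, hzi, hi₀])
          rw [← hrepval i, hrr]
        rw [finset_inf_eq_const _ _ (x (rep i₀))
          ⟨i₀, Finset.mem_filter.mpr ⟨Finset.mem_univ _, hi₀⟩⟩ hval]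
        rw [hfz, ← hi₀, hz0, hσR _ hr0]
  have hJ : Jz P a b a' b' f z x = f x := by
    rw [Jz, hV, hK, inf_top_eq]
  calc f x = Jz P a b a' b' f z x := hJ.symm
  _ ≤ Z.sup (fun z => Jz P a b a' b' f z x) := Finset.le_sup (f := fun z => Jz P a b a' b' f z x) hzZ

/-- A realization of a formula only depends on the values of the assignment on the free
variables. -/
lemma formula_realize_congr {Lg : Language} {M : Type*} [Lg.Structure M] {α : Type*}
    [DecidableEq α] (φ : Lg.Formula α) {v w : α → M}
    (h : ∀ a ∈ φ.freeVarFinset, v a = w a) : φ.Realize v ↔ φ.Realize w := by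
  have hvw : (v ∘ (↑) : (↑(↑φ.freeVarFinset : Set α)) → M) = w ∘ (↑) :=
    funext fun a => h a.1 (Finset.mem_coe.mp a.2)
  have e1 : φ.Realize v ↔ (φ.restrictFreeVar
      (Set.inclusion (Set.Subset.refl (↑φ.freeVarFinset : Set α)))).Realize
      (v ∘ (↑)) default :=
    (Language.BoundedFormula.realize_restrictFreeVar' (Set.Subset.refl _)).symm
  have e2 : φ.Realize w ↔ (φ.restrictFreeVar
      (Set.inclusion (Set.Subset.refl (↑φ.freeVarFinset : Set α)))).Realize
      (w ∘ (↑)) default :=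
    (Language.BoundedFormula.realize_restrictFreeVar' (Set.Subset.refl _)).symm
  rw [e1, e2, hvw]

end Stmt7Aux

/-- In an infinite flat bounded lattice, every monotone function `f : Lⁿ → L` whose
graph is first-order definable (with parameters from `L`) in the language
`(⊓, ⊔, ⊥, ⊤)` is a polynomial function. -/
theorem stmt7 {L : Type u} [Lattice L] [BoundedOrder L] [Infinite L]
    (hbt : (⊥ : L) ≠ ⊤)
    (hflat : ∀ a b : L, a ≤ b → a = ⊥ ∨ b = ⊤ ∨ a = b)
    (n : ℕ) (f : (Fin n → L) → L) (hf : Monotone f)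
    (hdef : letI := boundedLatticeStructure L
      Set.Definable (Set.univ : Set L) boundedLatticeLang
        { x : Fin (n + 1) → L | f (fun i => x i.castSucc) = x (Fin.last n) }) :
    IsLatticePolynomial f := by
  classical
  letI inst := boundedLatticeStructure L
  obtain ⟨φ, hφ⟩ := Set.definable_iff_exists_formula_sum.mp hdef
  set P : Finset L := (φ.freeVarFinset.image
    (fun a => Sum.elim (fun s : ↥(Set.univ : Set L) => (s : L)) (fun _ => (⊥ : L)) a)).filter
    (· ∈ Stmt7Aux.Mid L) with hP
  have hPM : ↑P ⊆ Stmt7Aux.Mid L := fun p hp => by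
    simpa using (Finset.mem_filter.mp hp).2
  have heq : ∀ σ : L ≃o L, (∀ p ∈ P, σ p = p) → ∀ y : Fin n → L, f (⇑σ ∘ y) = σ (f y) := by
    intro σ hσ y
    let g : L ≃[boundedLatticeLang] L :=
      { toEquiv := σ.toEquiv
        map_fun' := by
          intro k F xv
          match k, F with
          | 0, false => exact σ.map_bot
          | 0, true => exact σ.map_top
          | 1, F => exact F.elim
          | 2, false => exact σ.map_inf (xv 0) (xv 1)
          | 2, true => exact σ.map_sup (xv 0) (xv 1)
          | (m + 3), F => exact F.elim
        map_rel' := by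
          intro k r xv
          exact r.elim }
    have hgraph : ∀ w : Fin (n + 1) → L,
        (f (fun i => w i.castSucc) = w (Fin.last n)) ↔ φ.Realize (Sum.elim (↑) w) :=
      fun w => Set.ext_iff.mp hφ w
    have hReal : ∀ w : Fin (n + 1) → L,
        φ.Realize (Sum.elim (↑) w) ↔ φ.Realize (Sum.elim (↑) (⇑σ ∘ w)) := by
      intro w
      have h1 : φ.Realize ((⇑g) ∘ (Sum.elim (↑) w)) ↔ φ.Realize (Sum.elim (↑) w) :=
        FirstOrder.Language.StrongHomClass.realize_formula g φ
      have h2 : (⇑g) ∘ (Sum.elim ((↑) : ↥(Set.univ : Set L) → L) w)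
          = Sum.elim ((⇑σ) ∘ (↑)) (⇑σ ∘ w) := by
        rw [Sum.comp_elim]
        rfl
      have h3 : φ.Realize (Sum.elim ((⇑σ) ∘ (↑)) (⇑σ ∘ w)) ↔
          φ.Realize (Sum.elim (↑) (⇑σ ∘ w)) := by
        refine Stmt7Aux.formula_realize_congr φ (fun aa ha => ?_)
        rcases aa with s | i
        · show σ (s : L) = (s : L)
          by_cases hm : (s : L) ∈ Stmt7Aux.Mid L
          · refine hσ _ ?_
            rw [hP]
            refine Finset.mem_filter.mpr ⟨Finset.mem_image.mpr ⟨Sum.inl s, ha, rfl⟩,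
              by simpa using hm⟩
          · have hbt2 : (s : L) = ⊥ ∨ (s : L) = ⊤ := by
              by_contra hc
              push_neg at hc
              exact hm ⟨hc.1, hc.2⟩
            rcases hbt2 with h | h
            · rw [h, map_bot]
            · rw [h, map_top]
        · rfl
      rw [← h1, h2, h3]
    have hm0 : f (fun i => (Fin.snoc y (f y) : Fin (n + 1) → L) i.castSucc)
        = (Fin.snoc y (f y) : Fin (n + 1) → L) (Fin.last n) := by
      simp [Fin.snoc_castSucc, Fin.snoc_last]
    have h4 := (hReal _).mp ((hgraph _).mp hm0)
    have h6 := (hgraph (⇑σ ∘ Fin.snoc y (f y))).mpr h4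
    simp only [Function.comp_apply, Fin.snoc_castSucc, Fin.snoc_last] at h6
    exact h6
  exact Stmt7Aux.key hbt hflat P hPM f hf heq
end

section
/- Let L be an infinite flat bounded lattice, let n ∈ ℕ, and let f : Lⁿ → L be monotone (with respect to the componentwise order on Lⁿ). Suppose there is a finite set C ⊆ L such that for every bijection π : L → L fixing every element of C ∪ {⊥, ⊤}, one has f(π(x₁), …, π(xₙ)) = π(f(x₁, …, xₙ)) for all x₁, …, xₙ ∈ L. Then f is an n-ary polynomial function on L. -/
/-!
Let `D = C ∪ {⊥, ⊤}` and let `G` be the group of permutations of `L` fixing `D` pointwise.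
Equivariance under `G` forces `f x ∈ D` or `f x = xᵢ` for some `i`: otherwise a swap of `f x`
with a fresh element fixes `x` but moves `f x`. Every tuple is a `G`-translate of one of the
finitely many tuples `w` with entries in `D ∪ {u₁, …, uₙ}` for fresh `uᵢ`, and `f x` is the join,
over these `w`, of `V_w(x) ⊓ [x lies above the G-orbit of w]`, where `V_w` is a constant or a meet
of coordinates. By flatness, lying above the orbit of `w` is a finite conjunction of conditions
`a ≤ t` and `¬ t ≤ d` with `t` a coordinate or the meet or join of two coordinates, and all of
these are polynomial because, for four distinct elements `m₀, …, m₃ ∉ {⊥, ⊤}`,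
`((y ⊓ m₀) ⊔ (y ⊓ m₁)) ⊓ ((y ⊓ m₂) ⊔ (y ⊓ m₃))` is `⊤` at `y = ⊤` and `⊥` elsewhere.
-/

universe u

open Equiv

section Permutations

variable {α ι : Type*}

theorem exists_injective_forall_notMem [Infinite α] [Finite ι] (S : Finset α) :
    ∃ u : ι → α, Function.Injective u ∧ ∀ i, u i ∉ S := by
  obtain ⟨k, ⟨e⟩⟩ := Finite.exists_equiv_fin ι
  let g := Set.Infinite.natEmbedding _ S.finite_toSet.infinite_compl
  refine ⟨fun i => g (e i), fun i j h => ?_, fun i => (g (e i)).2⟩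
  exact e.injective (Fin.val_injective (g.injective (Subtype.ext h)))

theorem smul_notMem_of_mem_fixingSubgroup {D : Set α} {π : Perm α}
    (hπ : π ∈ fixingSubgroup (Perm α) D) {a : α} (ha : a ∉ D) : π a ∉ D := fun h =>
  ha (π.injective ((mem_fixingSubgroup_iff _).1 hπ _ h) ▸ h)

theorem swap_mem_fixingSubgroup [DecidableEq α] {D : Set α} {a b : α} (ha : a ∉ D)
    (hb : b ∉ D) : swap a b ∈ fixingSubgroup (Perm α) D :=
  (mem_fixingSubgroup_iff _).2 fun _ hd =>
    swap_apply_of_ne_of_ne (fun h => ha (h ▸ hd)) (fun h => hb (h ▸ hd))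

theorem exists_mem_fixingSubgroup_apply_eq [Finite ι] {D : Set α} {a b : ι → α}
    (hab : ∀ i j, a i = a j ↔ b i = b j) (ha : ∀ i, a i ∉ D) (hb : ∀ i, b i ∉ D) :
    ∃ π ∈ fixingSubgroup (Perm α) D, ∀ i, π (a i) = b i := by
  classical
  let a' : Quotient (Setoid.ker a) → {x // x ∉ D} :=
    Quotient.lift (fun i => ⟨a i, ha i⟩) fun _ _ h => Subtype.ext h
  let b' : Quotient (Setoid.ker a) → {x // x ∉ D} :=
    Quotient.lift (fun i => ⟨b i, hb i⟩) fun i j h => Subtype.ext ((hab i j).1 h)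
  obtain ⟨σ, hσ⟩ := Perm.exists_extending_pair a' b'
    (by rintro ⟨i⟩ ⟨j⟩ h; exact Quotient.sound (congrArg Subtype.val h))
    (by rintro ⟨i⟩ ⟨j⟩ h; exact Quotient.sound ((hab i j).2 (congrArg Subtype.val h)))
  refine ⟨Perm.ofSubtype σ, (mem_fixingSubgroup_iff _).2 fun d hd =>
    Perm.ofSubtype_apply_of_not_mem σ (not_not.2 hd), fun i => ?_⟩
  rw [Perm.ofSubtype_apply_of_mem σ (ha i)]
  exact congrArg Subtype.val (hσ ⟦i⟧)

end Permutations

section Equivariant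

variable {α ι : Type*} {D : Finset α} {f : (ι → α) → α}

theorem smul_apply_le [Preorder α]
    (hf : ∀ π ∈ fixingSubgroup (Perm α) (D : Set α), ∀ x, f (π • x) = π • f x) (hmono : Monotone f)
    {π : Perm α} (hπ : π ∈ fixingSubgroup (Perm α) (D : Set α)) {w x : ι → α} (h : π • w ≤ x) :
    π • f w ≤ f x :=
  hf π hπ w ▸ hmono h

theorem exists_apply_eq_of_notMem [Infinite α] [Fintype ι]
    (hf : ∀ π ∈ fixingSubgroup (Perm α) (D : Set α), ∀ x, f (π • x) = π • f x)
    {x : ι → α} (hx : f x ∉ D) : ∃ i, x i = f x := by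
  classical
  by_contra! h
  obtain ⟨v, hv⟩ := Infinite.exists_notMem_finset (D ∪ insert (f x) (Finset.univ.image x))
  simp only [Finset.mem_union, Finset.mem_insert, Finset.mem_image, Finset.mem_univ, true_and,
    not_or, not_exists] at hv
  have hfix : swap (f x) v • x = x :=
    funext fun i => swap_apply_of_ne_of_ne (h i) (hv.2.2 i)
  have := hf _ (swap_mem_fixingSubgroup hx hv.1) x
  rw [hfix, Perm.smul_def, swap_apply_left] at this
  exact hv.2.1 this.symm

theorem exists_mem_union_range_smul_eq [Finite ι] {u : ι → α} (hu : Function.Injective u)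
    (huD : ∀ i, u i ∉ D) (x : ι → α) :
    ∃ w : ι → α, (∀ i, w i ∈ (D : Set α) ∪ Set.range u) ∧
      ∃ π ∈ fixingSubgroup (Perm α) (D : Set α), π • w = x := by
  classical
  let g : α → α := fun v => if h : ∃ j, x j = v then u h.choose else v
  have hg : ∀ i, ∃ j, x j = x i ∧ g (x i) = u j := fun i =>
    have h : ∃ j, x j = x i := ⟨i, rfl⟩
    ⟨h.choose, h.choose_spec, dif_pos h⟩
  obtain ⟨π, hπ, hπx⟩ := exists_mem_fixingSubgroup_apply_eq (D := (D : Set α))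
    (a := fun i : {i // x i ∉ D} => x i) (b := fun i => g (x i))
    (fun i j => ⟨fun h => congrArg g h, fun h => by
      obtain ⟨k, hk, hgk⟩ := hg i
      obtain ⟨l, hl, hgl⟩ := hg j
      rw [← hk, ← hl, hu (hgk.symm.trans (h.trans hgl))]⟩)
    (fun i => i.2) (fun i => by obtain ⟨k, -, hk⟩ := hg i; exact hk ▸ huD k)
  refine ⟨π • x, fun i => ?_, π⁻¹, inv_mem hπ, inv_smul_smul π x⟩
  by_cases hi : x i ∈ D
  · left
    rw [Pi.smul_apply, (mem_fixingSubgroup_iff _).1 hπ _ hi]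
    exact hi
  · obtain ⟨k, -, hk⟩ := hg i
    exact Or.inr ⟨k, (hπx ⟨i, hi⟩).trans hk |>.symm⟩

end Equivariant

def IsFlat (L : Type*) [Lattice L] [BoundedOrder L] : Prop :=
  ∀ a b : L, a ≤ b → a = ⊥ ∨ b = ⊤ ∨ a = b

namespace IsFlat

variable {L : Type*} [Lattice L] [BoundedOrder L] (hL : IsFlat L) {a b c : L}
include hL

theorem eq_of_le (h : a ≤ b) (ha : a ≠ ⊥) (hb : b ≠ ⊤) : a = b := by
  rcases hL a b h with h | h | h
  exacts [absurd h ha, absurd h hb, h]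

theorem inf_eq_bot (ha : a ≠ ⊤) (hb : b ≠ ⊤) (hab : a ≠ b) : a ⊓ b = ⊥ := by
  by_contra h
  exact hab ((hL.eq_of_le inf_le_left h ha).symm.trans (hL.eq_of_le inf_le_right h hb))

theorem sup_eq_top (ha : a ≠ ⊥) (hb : b ≠ ⊥) (hab : a ≠ b) : a ⊔ b = ⊤ := by
  by_contra h
  exact hab ((hL.eq_of_le le_sup_left ha h).trans (hL.eq_of_le le_sup_right hb h).symm)

theorem eq_top_of_le_of_le (ha : a ≠ ⊥) (hb : b ≠ ⊥) (hab : a ≠ b) (hac : a ≤ c)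
    (hbc : b ≤ c) : c = ⊤ :=
  top_unique ((hL.sup_eq_top ha hb hab).symm.trans_le (sup_le hac hbc))

end IsFlat

section TopIf

variable {L : Type*} [Lattice L] [BoundedOrder L] {P Q : Prop}

open Classical in
noncomputable def topIf (P : Prop) : L := if P then ⊤ else ⊥

theorem topIf_pos (h : P) : (topIf P : L) = ⊤ := by simp [topIf, h]

theorem topIf_neg (h : ¬P) : (topIf P : L) = ⊥ := by simp [topIf, h]

theorem topIf_and : (topIf (P ∧ Q) : L) = topIf P ⊓ topIf Q := by
  by_cases hP : P <;> by_cases hQ : Q <;> simp [topIf, hP, hQ]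

theorem topIf_or : (topIf (P ∨ Q) : L) = topIf P ⊔ topIf Q := by
  by_cases hP : P <;> by_cases hQ : Q <;> simp [topIf, hP, hQ]

theorem Finset.inf_topIf {ι : Type*} (s : Finset ι) (P : ι → Prop) :
    (s.inf fun i => topIf (P i) : L) = topIf (∀ i ∈ s, P i) := by
  induction s using Finset.cons_induction with
  | empty => simp [topIf]
  | cons a s ha ih => rw [Finset.inf_cons, ih, ← topIf_and, Finset.forall_mem_cons]

end TopIf

namespace IsLatticePolynomial

variable {L : Type*} [Lattice L] [BoundedOrder L] {n : ℕ} {ι : Type*}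

theorem finset_inf (s : Finset ι) {g : ι → (Fin n → L) → L}
    (hg : ∀ i ∈ s, IsLatticePolynomial (g i)) :
    IsLatticePolynomial fun x => s.inf fun i => g i x := by
  simp only [← Finset.inf_apply]
  exact Finset.inf_induction (p := IsLatticePolynomial) (const ⊤) (fun _ h₁ _ h₂ => inf h₁ h₂) hg

theorem finset_sup (s : Finset ι) {g : ι → (Fin n → L) → L}
    (hg : ∀ i ∈ s, IsLatticePolynomial (g i)) :
    IsLatticePolynomial fun x => s.sup fun i => g i x := by
  simp only [← Finset.sup_apply]
  exact Finset.sup_induction (p := IsLatticePolynomial) (const ⊥) (fun _ h₁ _ h₂ => sup h₁ h₂) hg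

end IsLatticePolynomial

section PolynomialPred

variable {L : Type*} [Lattice L] [BoundedOrder L] {n : ℕ}

def IsPolynomialPred (P : (Fin n → L) → Prop) : Prop :=
  IsLatticePolynomial fun x => (topIf (P x) : L)

namespace IsPolynomialPred

variable {P Q : (Fin n → L) → Prop}

theorem const (p : Prop) : IsPolynomialPred fun _ : Fin n → L => p :=
  IsLatticePolynomial.const _

theorem and (hP : IsPolynomialPred P) (hQ : IsPolynomialPred Q) :
    IsPolynomialPred fun x => P x ∧ Q x := by
  simpa only [IsPolynomialPred, topIf_and] using hP.inf hQ

theorem or (hP : IsPolynomialPred P) (hQ : IsPolynomialPred Q) :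
    IsPolynomialPred fun x => P x ∨ Q x := by
  simpa only [IsPolynomialPred, topIf_or] using hP.sup hQ

theorem imp (p : Prop) (hP : p → IsPolynomialPred P) : IsPolynomialPred fun x => p → P x := by
  by_cases hp : p
  · simpa [hp] using hP hp
  · simpa [hp] using const (L := L) (n := n) True

theorem forall_mem {ι : Type*} (s : Finset ι) {P : ι → (Fin n → L) → Prop}
    (hP : ∀ i ∈ s, IsPolynomialPred (P i)) : IsPolynomialPred fun x => ∀ i ∈ s, P i x := by
  simpa only [IsPolynomialPred, ← Finset.inf_topIf] using
    IsLatticePolynomial.finset_inf s hP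

theorem forall_fintype {ι : Type*} [Fintype ι] {P : ι → (Fin n → L) → Prop}
    (hP : ∀ i, IsPolynomialPred (P i)) : IsPolynomialPred fun x => ∀ i, P i x := by
  simpa using forall_mem Finset.univ fun i _ => hP i

end IsPolynomialPred

variable (hL : IsFlat L) [Infinite L] {g : (Fin n → L) → L}
include hL

theorem isPolynomialPred_top_le (hg : IsLatticePolynomial g) :
    IsPolynomialPred fun x => ⊤ ≤ g x := by
  classical
  obtain ⟨m, hm, hmS⟩ := exists_injective_forall_notMem (ι := Fin 4) ({⊥, ⊤} : Finset L)
  simp only [Finset.mem_insert, Finset.mem_singleton, not_or] at hmS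
  have key : ∀ y : L, ((y ⊓ m 0) ⊔ (y ⊓ m 1)) ⊓ ((y ⊓ m 2) ⊔ (y ⊓ m 3)) = topIf (⊤ ≤ y) := by
    intro y
    by_cases hy : y = ⊤
    · simp [hy, topIf, hL.sup_eq_top (hmS 0).1 (hmS 1).1 (hm.ne (by decide)),
        hL.sup_eq_top (hmS 2).1 (hmS 3).1 (hm.ne (by decide))]
    have hinf : ∀ j, y ≠ m j → y ⊓ m j = ⊥ := fun j => hL.inf_eq_bot hy (hmS j).2
    rw [topIf_neg (by rwa [top_le_iff])]
    by_cases h01 : y = m 0 ∨ y = m 1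
    · obtain ⟨h2, h3⟩ : y ≠ m 2 ∧ y ≠ m 3 := by
        rcases h01 with rfl | rfl <;> exact ⟨hm.ne (by decide), hm.ne (by decide)⟩
      simp [hinf 2 h2, hinf 3 h3]
    · rw [not_or] at h01
      simp [hinf 0 h01.1, hinf 1 h01.2]
  unfold IsPolynomialPred
  simp only [← key]
  exact ((hg.inf (.const _)).sup (hg.inf (.const _))).inf
    ((hg.inf (.const _)).sup (hg.inf (.const _)))

theorem isPolynomialPred_not_le (d : L) (hg : IsLatticePolynomial g) :
    IsPolynomialPred fun x => ¬g x ≤ d := by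
  have of_ne_bot : ∀ d : L, d ≠ ⊥ → IsPolynomialPred fun x => ¬g x ≤ d := by
    intro d hd
    by_cases hdt : d = ⊤
    · simpa [hdt] using IsPolynomialPred.const (L := L) (n := n) False
    have hiff : ∀ y, ¬y ≤ d ↔ ⊤ ≤ y ⊔ d := fun y =>
      ⟨fun h => top_le_iff.2 <| by_contra fun h' =>
          h (sup_eq_right.1 (hL.eq_of_le le_sup_right hd h').symm),
        fun h hyd => hdt (top_le_iff.1 (sup_eq_right.2 hyd ▸ h))⟩
    simpa only [hiff] using isPolynomialPred_top_le hL (hg.sup (.const d))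
  by_cases hd : d = ⊥
  · classical
    obtain ⟨m, hm, hmS⟩ := exists_injective_forall_notMem (ι := Fin 2) ({⊥, ⊤} : Finset L)
    simp only [Finset.mem_insert, Finset.mem_singleton, not_or] at hmS
    have hiff : ∀ y, ¬y ≤ d ↔ ¬y ≤ m 0 ∨ ¬y ≤ m 1 := fun y => by
      rw [hd, ← not_and_or, ← le_inf_iff, hL.inf_eq_bot (hmS 0).2 (hmS 1).2 (hm.ne (by decide))]
    simpa only [hiff] using (of_ne_bot _ (hmS 0).1).or (of_ne_bot _ (hmS 1).1)
  · exact of_ne_bot d hd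

theorem isPolynomialPred_le (a : L) (hg : IsLatticePolynomial g) :
    IsPolynomialPred fun x => a ≤ g x := by
  by_cases hb : a = ⊥
  · simpa [hb] using IsPolynomialPred.const (L := L) (n := n) True
  by_cases ht : a = ⊤
  · subst ht
    exact isPolynomialPred_top_le hL hg
  have hiff : ∀ y, a ≤ y ↔ ¬y ⊓ a ≤ ⊥ := fun y =>
    ⟨fun h h' => hb (le_bot_iff.1 ((le_inf h le_rfl).trans h')),
      fun h => hL.eq_of_le inf_le_right (h ∘ le_bot_iff.2) ht ▸ inf_le_left⟩
  simpa only [hiff] using isPolynomialPred_not_le hL ⊥ (hg.inf (.const a))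

end PolynomialPred

section Orbit

variable {L ι : Type*} [Lattice L] [BoundedOrder L]

def AboveOrbit (D : Finset L) (w x : ι → L) : Prop :=
  ∃ π ∈ fixingSubgroup (Perm L) (D : Set L), π • w ≤ x

def OrbitConstraints (D : Finset L) (w x : ι → L) : Prop :=
  (∀ i, w i ∈ D → w i ≤ x i) ∧
  (∀ i, w i ∉ D → ∀ d ∈ D, d ≠ ⊤ → ¬x i ≤ d) ∧
  (∀ i j, w i ∉ D → w i = w j → ¬x i ⊓ x j ≤ ⊥) ∧
  (∀ i j, w i ∉ D → w j ∉ D → w i ≠ w j → ⊤ ≤ x i ⊔ x j)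

variable (hL : IsFlat L) {D : Finset L} {w x : ι → L}
include hL

theorem AboveOrbit.orbitConstraints (hbot : ⊥ ∈ D) (h : AboveOrbit D w x) :
    OrbitConstraints D w x := by
  obtain ⟨π, hπ, hle⟩ := h
  replace hle : ∀ i, π (w i) ≤ x i := hle
  have hfresh : ∀ i, w i ∉ D → π (w i) ∉ D := fun i => smul_notMem_of_mem_fixingSubgroup hπ
  have hne_bot : ∀ i, w i ∉ D → π (w i) ≠ ⊥ := fun i hi h => hfresh i hi (h ▸ hbot)
  refine ⟨fun i hi => ?_, fun i hi d hd hdt hxd => ?_, fun i j hi hij hx => ?_,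
    fun i j hi hj hij => ?_⟩
  · simpa [← Perm.smul_def, (mem_fixingSubgroup_iff _).1 hπ _ hi] using hle i
  · exact hfresh i hi (hL.eq_of_le ((hle i).trans hxd) (hne_bot i hi) hdt ▸ hd)
  · exact hne_bot i hi (le_bot_iff.1 ((le_inf (hle i) (hij ▸ hle j)).trans hx))
  · rw [← hL.sup_eq_top (hne_bot i hi) (hne_bot j hj) (π.injective.ne hij)]
    exact sup_le_sup (hle i) (hle j)

theorem OrbitConstraints.aboveOrbit [Finite ι] (h : OrbitConstraints D w x) :
    AboveOrbit D w x := by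
  obtain ⟨hmem, hnot_le, hinf, hsup⟩ := h
  obtain ⟨π, hπ, hπw⟩ := exists_mem_fixingSubgroup_apply_eq (D := (D : Set L))
    (a := fun i : {i // w i ∉ D ∧ x i ≠ ⊤} => w i) (b := fun i => x i)
    (fun ⟨i, hi, hxi⟩ ⟨j, hj, hxj⟩ =>
      ⟨fun h => by_contra fun hne => hinf i j hi h (hL.inf_eq_bot hxi hxj hne).le,
        fun h => by_contra fun hne => hxj (top_le_iff.1 (by simpa [h] using hsup i j hi hj hne))⟩)
    (fun i => i.2.1) (fun i hxD => hnot_le i i.2.1 (x i) hxD i.2.2 le_rfl)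
  refine ⟨π, hπ, fun i => ?_⟩
  by_cases hi : w i ∈ D
  · simpa [Perm.smul_def, (mem_fixingSubgroup_iff _).1 hπ _ hi] using hmem i hi
  by_cases hxi : x i = ⊤
  · exact hxi ▸ le_top
  · exact (hπw ⟨i, hi, hxi⟩).le

theorem isPolynomialPred_aboveOrbit [Infinite L] {n : ℕ} (hbot : ⊥ ∈ D) (w : Fin n → L) :
    IsPolynomialPred (AboveOrbit D w) := by
  have : AboveOrbit D w = OrbitConstraints D w :=
    funext fun x => propext ⟨fun h => h.orbitConstraints hL hbot, fun h => h.aboveOrbit hL⟩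
  rw [this]
  refine .and (.forall_fintype fun i => .imp _ fun _ => isPolynomialPred_le hL _ (.proj i))
    (.and (.forall_fintype fun i => .imp _ fun _ => .forall_mem D fun d _ =>
      .imp _ fun _ => isPolynomialPred_not_le hL d (.proj i)) (.and ?_ ?_))
  · exact .forall_fintype fun i => .forall_fintype fun j => .imp _ fun _ => .imp _ fun _ =>
      isPolynomialPred_not_le hL ⊥ ((IsLatticePolynomial.proj i).inf (.proj j))
  · exact .forall_fintype fun i => .forall_fintype fun j => .imp _ fun _ => .imp _ fun _ =>
      .imp _ fun _ => isPolynomialPred_top_le hL ((IsLatticePolynomial.proj i).sup (.proj j))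

end Orbit

section TransportedValue

variable {L ι : Type*} [Lattice L] [BoundedOrder L] [Fintype ι]

open Classical in
/-- The value `V_w(x)`: if `x = π • w` with `π ∈ G`, then `f x = π (f w)` is `f w` when `f w ∈ D`,
and otherwise the common value of the coordinates `xᵢ` with `wᵢ = f w`. -/
noncomputable def transportedValue (D : Finset L) (f : (ι → L) → L) (w x : ι → L) : L :=
  if f w ∈ D then f w else (Finset.univ.filter fun i => w i = f w).inf x

theorem isLatticePolynomial_transportedValue {n : ℕ} (D : Finset L) (f : (Fin n → L) → L)
    (w : Fin n → L) : IsLatticePolynomial (transportedValue D f w) := by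
  unfold transportedValue
  split_ifs
  · exact .const _
  · exact .finset_inf _ fun i _ => .proj i

variable [Infinite L] {D : Finset L} {f : (ι → L) → L}
  (hf : ∀ π ∈ fixingSubgroup (Perm L) (D : Set L), ∀ x, f (π • x) = π • f x)
include hf

theorem transportedValue_smul {π : Perm L} (hπ : π ∈ fixingSubgroup (Perm L) (D : Set L))
    (w : ι → L) : transportedValue D f w (π • w) = f (π • w) := by
  classical
  rw [hf π hπ w, transportedValue]
  split_ifs with hw
  · exact ((mem_fixingSubgroup_iff _).1 hπ _ hw).symm
  obtain ⟨i, hi⟩ := exists_apply_eq_of_notMem hf hw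
  apply le_antisymm
  · calc _ ≤ (π • w) i := Finset.inf_le (by simpa using hi)
      _ = π • f w := by rw [Pi.smul_apply, hi]
  · exact Finset.le_inf fun j hj => by rw [Pi.smul_apply, (Finset.mem_filter.1 hj).2]

variable (hmono : Monotone f) (hL : IsFlat L) (hbot : ⊥ ∈ D)
include hmono hL hbot

theorem apply_eq_top_of_smul_le {π : Perm L} (hπ : π ∈ fixingSubgroup (Perm L) (D : Set L))
    {w x : ι → L} (hle : π • w ≤ x) (hw : f w ∉ D) (htop : ∀ i, w i = f w → x i = ⊤) :
    f x = ⊤ := by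
  classical
  obtain ⟨i₀, hi₀⟩ := exists_apply_eq_of_notMem hf hw
  -- swapping `π (f w)` with a fresh `v` gives a second admissible permutation, so `f x` lies
  -- above the two distinct elements `π (f w)` and `v` outside `D`
  obtain ⟨v, hv⟩ := Infinite.exists_notMem_finset (D ∪ Finset.univ.image (π • w))
  simp only [Finset.mem_union, Finset.mem_image, Finset.mem_univ, true_and, not_or,
    not_exists] at hv
  have hπfw : π (f w) ∉ D := smul_notMem_of_mem_fixingSubgroup hπ hw
  have hπfw_ne : π (f w) ≠ ⊥ := fun h => hπfw (h ▸ hbot)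
  have hv_ne : v ≠ ⊥ := fun h => hv.1 (h ▸ hbot)
  have hσ := mul_mem (swap_mem_fixingSubgroup hπfw hv.1) hπ
  have hσle : (swap (π (f w)) v * π) • w ≤ x := fun i => by
    by_cases hi : w i = f w
    · exact htop i hi ▸ le_top
    · rw [Pi.smul_apply, Perm.smul_def, Perm.mul_apply,
        swap_apply_of_ne_of_ne (π.injective.ne hi) (hv.2 i)]
      exact hle i
  have hvfx := smul_apply_le hf hmono hσ hσle
  rw [Perm.smul_def, Perm.mul_apply, swap_apply_left] at hvfx
  refine hL.eq_top_of_le_of_le hπfw_ne hv_ne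
    (fun h => hv.2 i₀ ?_) (smul_apply_le hf hmono hπ hle) hvfx
  rw [Pi.smul_apply, hi₀]
  exact h

theorem transportedValue_le {w x : ι → L} (h : AboveOrbit D w x) :
    transportedValue D f w x ≤ f x := by
  obtain ⟨π, hπ, hle⟩ := h
  have hfx := smul_apply_le hf hmono hπ hle
  unfold transportedValue
  split_ifs with hw
  · rwa [(mem_fixingSubgroup_iff _).1 hπ _ hw] at hfx
  by_cases htop : ∀ i, w i = f w → x i = ⊤
  · exact apply_eq_top_of_smul_le hf hmono hL hbot hπ hle hw htop ▸ le_top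
  obtain ⟨i, hi, hxi⟩ : ∃ i, w i = f w ∧ x i ≠ ⊤ := by simpa using htop
  have hπwi : π (w i) ≠ ⊥ := fun h =>
    smul_notMem_of_mem_fixingSubgroup hπ (hi ▸ hw : w i ∉ D) (h ▸ hbot)
  calc _ ≤ x i := Finset.inf_le (by simpa using hi)
    _ = π • f w := by rw [← hi]; exact (hL.eq_of_le (hle i) hπwi hxi).symm
    _ ≤ f x := hfx

theorem exists_eq_finset_sup_transportedValue_inf :
    ∃ W : Finset (ι → L), ∀ x,
      f x = W.sup fun w => transportedValue D f w x ⊓ topIf (AboveOrbit D w x) := by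
  classical
  obtain ⟨u, hu, huD⟩ := exists_injective_forall_notMem (ι := ι) D
  refine ⟨Fintype.piFinset fun _ => D ∪ Finset.univ.image u, fun x =>
    le_antisymm ?_ (Finset.sup_le fun w _ => ?_)⟩
  · obtain ⟨w, hwW, π, hπ, rfl⟩ := exists_mem_union_range_smul_eq hu huD x
    refine Finset.le_sup_of_le (b := w) (Fintype.mem_piFinset.2 fun i => by simpa using hwW i) ?_
    rw [topIf_pos ⟨π, hπ, le_rfl⟩, inf_top_eq, transportedValue_smul hf hπ]
  · by_cases h : AboveOrbit D w x
    · exact inf_le_left.trans (transportedValue_le hf hmono hL hbot h)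
    · rw [topIf_neg h, inf_bot_eq]
      exact bot_le

end TransportedValue

theorem stmt8_general {L : Type u} [Lattice L] [BoundedOrder L] [Infinite L]
    (hflat : ∀ a b : L, a ≤ b → a = ⊥ ∨ b = ⊤ ∨ a = b)
    (n : ℕ) (f : (Fin n → L) → L) (hf : Monotone f)
    (C : Set L) (hC : C.Finite)
    (hsym : ∀ π : L ≃ L, (∀ c ∈ C ∪ {⊥, ⊤}, π c = c) →
      ∀ x : Fin n → L, f (fun i => π (x i)) = π (f x)) :
    IsLatticePolynomial f := by
  classical
  set D : Finset L := hC.toFinset ∪ {⊥, ⊤}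
  have hbot : ⊥ ∈ D := by simp [D]
  have hequiv : ∀ π ∈ fixingSubgroup (Perm L) (D : Set L), ∀ x, f (π • x) = π • f x :=
    fun π hπ => hsym π fun c hc => (mem_fixingSubgroup_iff _).1 hπ c (by simpa [D] using hc)
  obtain ⟨W, hW⟩ := exists_eq_finset_sup_transportedValue_inf hequiv hf hflat hbot
  rw [funext hW]
  exact .finset_sup W fun w _ =>
    (isLatticePolynomial_transportedValue D f w).inf (isPolynomialPred_aboveOrbit hflat hbot w)

/-- In an infinite flat bounded lattice, a monotone function `f : Lⁿ → L` that commutes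
with every bijection of `L` fixing a fixed finite set `C ∪ {⊥, ⊤}` pointwise is a
polynomial function. -/
theorem stmt8 {L : Type u} [Lattice L] [BoundedOrder L] [Infinite L]
    (hbt : (⊥ : L) ≠ ⊤)
    (hflat : ∀ a b : L, a ≤ b → a = ⊥ ∨ b = ⊤ ∨ a = b)
    (n : ℕ) (f : (Fin n → L) → L) (hf : Monotone f)
    (C : Set L) (hC : C.Finite)
    (hsym : ∀ π : L ≃ L, (∀ c ∈ C ∪ {⊥, ⊤}, π c = c) →
      ∀ x : Fin n → L, f (fun i => π (x i)) = π (f x)) :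
    IsLatticePolynomial f :=
  stmt8_general hflat n f hf C hC hsym
end

section
/- Let L be a flat bounded lattice, let α ∈ L \ {⊥, ⊤}, and let d₁, d₂ ∈ L be distinct elements with d₁, d₂ ∉ {⊥, ⊤, α}. Then for every a ∈ L: ((a ⊓ α) ⊔ d₁) ⊓ ((a ⊓ α) ⊔ d₂) equals ⊤ if α ≤ a, and equals ⊥ otherwise. In other words, the unary polynomial function a ↦ ((a ⊓ α) ⊔ d₁) ⊓ ((a ⊓ α) ⊔ d₂) is the monotone characteristic function of {α}. -/
universe u

open scoped Classical

section Flat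

variable {L : Type*} [Lattice L] [BoundedOrder L]
  (hflat : ∀ a b : L, a ≤ b → a = ⊥ ∨ b = ⊤ ∨ a = b)
include hflat

theorem sup_eq_top_of_flat {x y : L} (hx : x ≠ ⊥) (hy : y ≠ ⊥) (hxy : x ≠ y) :
    x ⊔ y = ⊤ := by
  rcases hflat y (x ⊔ y) le_sup_right with h | h | h
  · exact absurd h hy
  · exact h
  · have hxy' : x ≤ y := h ▸ le_sup_left
    rcases hflat x y hxy' with h' | h' | h'
    · exact absurd h' hx
    · rw [h', sup_top_eq]
    · exact absurd h' hxy

theorem inf_eq_bot_of_flat {x y : L} (hx : x ≠ ⊤) (hy : y ≠ ⊤) (hxy : x ≠ y) :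
    x ⊓ y = ⊥ := by
  rcases hflat (x ⊓ y) x inf_le_left with h | h | h
  · exact h
  · exact absurd h hx
  · have hxy' : x ≤ y := h ▸ inf_le_right
    rcases hflat x y hxy' with h' | h' | h'
    · rw [h', bot_inf_eq]
    · exact absurd h' hy
    · exact absurd h' hxy

end Flat

theorem stmt11_general {L : Type u} [Lattice L] [BoundedOrder L]
    (hflat : ∀ a b : L, a ≤ b → a = ⊥ ∨ b = ⊤ ∨ a = b)
    (α : L) (hα : α ∉ ({⊥, ⊤} : Set L))
    (d₁ d₂ : L) (hd : d₁ ≠ d₂)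
    (hd₁ : d₁ ∉ ({⊥, ⊤, α} : Set L)) (hd₂ : d₂ ∉ ({⊥, ⊤, α} : Set L))
    (a : L) :
    ((a ⊓ α) ⊔ d₁) ⊓ ((a ⊓ α) ⊔ d₂) = if α ≤ a then ⊤ else ⊥ := by
  simp only [Set.mem_insert_iff, Set.mem_singleton_iff, not_or] at hα hd₁ hd₂
  obtain ⟨hα_bot, hα_top⟩ := hα
  obtain ⟨hd₁_bot, hd₁_top, hd₁_α⟩ := hd₁
  obtain ⟨hd₂_bot, hd₂_top, hd₂_α⟩ := hd₂
  split_ifs with h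
  · rw [inf_eq_right.mpr h, sup_eq_top_of_flat hflat hα_bot hd₁_bot (Ne.symm hd₁_α),
      sup_eq_top_of_flat hflat hα_bot hd₂_bot (Ne.symm hd₂_α), top_inf_eq]
  · have ha_top : a ≠ ⊤ := by rintro rfl; exact h le_top
    have ha_α : a ≠ α := by rintro rfl; exact h le_rfl
    rw [inf_eq_bot_of_flat hflat ha_top hα_top ha_α, bot_sup_eq, bot_sup_eq,
      inf_eq_bot_of_flat hflat hd₁_top hd₂_top hd]

/-- In a flat bounded lattice, the unary polynomial
`a ↦ ((a ⊓ α) ⊔ d₁) ⊓ ((a ⊓ α) ⊔ d₂)` (for `α ∉ {⊥, ⊤}` and distinct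
`d₁, d₂ ∉ {⊥, ⊤, α}`) is the monotone characteristic function of `{α}`. -/
theorem stmt11 {L : Type u} [Lattice L] [BoundedOrder L]
    (hbt : (⊥ : L) ≠ ⊤)
    (hflat : ∀ a b : L, a ≤ b → a = ⊥ ∨ b = ⊤ ∨ a = b)
    (α : L) (hα : α ∉ ({⊥, ⊤} : Set L))
    (d₁ d₂ : L) (hd : d₁ ≠ d₂)
    (hd₁ : d₁ ∉ ({⊥, ⊤, α} : Set L)) (hd₂ : d₂ ∉ ({⊥, ⊤, α} : Set L))
    (a : L) :
    ((a ⊓ α) ⊔ d₁) ⊓ ((a ⊓ α) ⊔ d₂) = if α ≤ a then ⊤ else ⊥ :=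
  stmt11_general hflat α hα d₁ d₂ hd hd₁ hd₂ a
end

section
/- For a lattice L the following are equivalent: (i) for every monotone function g : L → L and every finite subset F ⊆ L there is a unary polynomial function p on L with p(x) = g(x) for all x ∈ F; (ii) for all a, b, c, d ∈ L with ¬(b ≤ a) and c ≤ d there is a unary polynomial function p on L with p(a) = c and p(b) = d. -/
/-! Interpolating a monotone `g` on a finite set `F` reduces to two-point interpolation.
For `a, b ∈ F` with `¬ b ≤ a`, a two-point polynomial sending `a ↦ g a ⊓ g b` and `b ↦ g b`
agrees with `g` at `b` and lies below `g` at `a`; when `b ≤ a` the constant `g b` does the same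
by monotonicity. The meet over `a ∈ F` of these polynomials agrees with `g` at `b` and lies
below `g` on all of `F`, and the join over `b ∈ F` of those meets equals `g` on `F`.
Conversely, two-point interpolation is interpolation of the monotone step function that is `d`
on the principal filter of `b` and `c` elsewhere. -/

universe u

/-- A unary polynomial function on a lattice: member of the smallest set of functions
`L → L` containing the identity and all constant functions and closed under
pointwise meet and join. -/
inductive IsUnaryLatticePolynomial {L : Type u} [Lattice L] : (L → L) → Prop
  | id : IsUnaryLatticePolynomial (fun x => x)
  | const (c : L) : IsUnaryLatticePolynomial (fun _ => c)
  | inf {p q : L → L} : IsUnaryLatticePolynomial p → IsUnaryLatticePolynomial q →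
      IsUnaryLatticePolynomial (fun x => p x ⊓ q x)
  | sup {p q : L → L} : IsUnaryLatticePolynomial p → IsUnaryLatticePolynomial q →
      IsUnaryLatticePolynomial (fun x => p x ⊔ q x)

variable {L : Type u} [Lattice L]

def HasTwoPointInterpolation (L : Type u) [Lattice L] : Prop :=
  ∀ a b c d : L, ¬ b ≤ a → c ≤ d →
    ∃ p : L → L, IsUnaryLatticePolynomial p ∧ p a = c ∧ p b = d

lemma monotone_ite_le_const {b c d : L} [DecidablePred (b ≤ ·)] (hcd : c ≤ d) :
    Monotone fun x => if b ≤ x then d else c := by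
  intro x y hxy
  dsimp only
  split_ifs with hx hy
  · exact le_rfl
  · exact absurd (hx.trans hxy) hy
  · exact hcd
  · exact le_rfl

lemma HasTwoPointInterpolation.exists_eq_and_le (h : HasTwoPointInterpolation L)
    {g : L → L} (hg : Monotone g) (a b : L) :
    ∃ p : L → L, IsUnaryLatticePolynomial p ∧ p b = g b ∧ p a ≤ g a := by
  by_cases hba : b ≤ a
  · exact ⟨fun _ => g b, .const _, rfl, hg hba⟩
  · obtain ⟨p, hp, hpa, hpb⟩ := h a b (g a ⊓ g b) (g b) hba inf_le_right
    exact ⟨p, hp, hpb, hpa ▸ inf_le_left⟩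

lemma exists_eq_and_le_on_of_forall {g : L → L} (b : L) (F : Finset L)
    (h : ∀ a ∈ F, ∃ p : L → L, IsUnaryLatticePolynomial p ∧ p b = g b ∧ p a ≤ g a) :
    ∃ q : L → L, IsUnaryLatticePolynomial q ∧ q b = g b ∧ ∀ x ∈ F, q x ≤ g x := by
  classical
  induction F using Finset.induction_on with
  | empty => exact ⟨fun _ => g b, .const _, rfl, by simp⟩
  | insert a F _ ih =>
    obtain ⟨p, hp, hpb, hpa⟩ := h a (F.mem_insert_self a)
    obtain ⟨q, hq, hqb, hqF⟩ := ih fun x hx => h x (F.mem_insert_of_mem hx)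
    refine ⟨fun x => p x ⊓ q x, .inf hp hq, by simp [hpb, hqb], ?_⟩
    simp only [Finset.mem_insert, forall_eq_or_imp]
    exact ⟨inf_le_left.trans hpa, fun x hx => inf_le_right.trans (hqF x hx)⟩

lemma exists_ge_on_and_le_on_of_forall {g : L → L} {F G : Finset L} (hG : G.Nonempty)
    (h : ∀ b ∈ G, ∃ q : L → L, IsUnaryLatticePolynomial q ∧ q b = g b ∧ ∀ x ∈ F, q x ≤ g x) :
    ∃ p : L → L, IsUnaryLatticePolynomial p ∧ (∀ x ∈ G, g x ≤ p x) ∧ ∀ x ∈ F, p x ≤ g x := by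
  induction hG using Finset.Nonempty.cons_induction with
  | singleton b =>
    obtain ⟨q, hq, hqb, hqF⟩ := h b (Finset.mem_singleton_self b)
    exact ⟨q, hq, by simp [hqb], hqF⟩
  | cons b G hb _ ih =>
    obtain ⟨q, hq, hqb, hqF⟩ := h b (G.mem_cons_self b)
    obtain ⟨p, hp, hpG, hpF⟩ := ih fun x hx => h x (Finset.mem_cons_of_mem hx)
    refine ⟨fun x => q x ⊔ p x, .sup hq hp, ?_, fun x hx => sup_le (hqF x hx) (hpF x hx)⟩
    simp only [Finset.mem_cons, forall_eq_or_imp]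
    exact ⟨hqb.symm.le.trans le_sup_left, fun x hx => (hpG x hx).trans le_sup_right⟩

lemma HasTwoPointInterpolation.exists_eq_on (h : HasTwoPointInterpolation L)
    {g : L → L} (hg : Monotone g) (F : Finset L) :
    ∃ p : L → L, IsUnaryLatticePolynomial p ∧ ∀ x ∈ F, p x = g x := by
  rcases F.eq_empty_or_nonempty with rfl | hF
  · exact ⟨id, .id, by simp⟩
  obtain ⟨p, hp, hge, hle⟩ := exists_ge_on_and_le_on_of_forall hF fun b _ =>
    exists_eq_and_le_on_of_forall b F fun a _ => h.exists_eq_and_le hg a b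
  exact ⟨p, hp, fun x hx => (hle x hx).antisymm (hge x hx)⟩

/-- The two formulations of the unary interpolation property for a lattice are
equivalent: interpolating every monotone function on every finite set, and two-point
interpolation of the pairs `(a, c)`, `(b, d)` with `¬ b ≤ a` and `c ≤ d`. -/
theorem stmt14 {L : Type u} [Lattice L] :
    (∀ g : L → L, Monotone g → ∀ F : Finset L,
      ∃ p : L → L, IsUnaryLatticePolynomial p ∧ ∀ x ∈ F, p x = g x) ↔
    (∀ a b c d : L, ¬ b ≤ a → c ≤ d →
      ∃ p : L → L, IsUnaryLatticePolynomial p ∧ p a = c ∧ p b = d) := by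
  classical
  refine ⟨fun h a b c d hba hcd => ?_, fun h g hg => HasTwoPointInterpolation.exists_eq_on h hg⟩
  obtain ⟨p, hp, hpF⟩ := h _ (monotone_ite_le_const (b := b) hcd) {a, b}
  exact ⟨p, hp, by simp [hpF, hba], by simp [hpF]⟩
end
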